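/- arXiv:1806.06333 — 15 statements merged into one kernel-verified Lean document; each statement's English description precedes it below -/
import Mathlib

section
/- Let h : ℝⁿ → ℝ be a convex function, let S := {z ∈ ℝⁿ : h attains its minimum at z} and let x̄ ∈ S. Suppose ∂h is metrically subregular at x̄ for 0 with modulus κ > 0, i.e. there exists ε > 0 such that for every x with ‖x − x̄‖ ≤ ε and every v ∈ ∂h(x) one has d(x; S) ≤ κ‖v‖. Then h satisfies the second-order growth condition at x̄ with constant c = κ⁻¹: there exists ε' > 0 such that h(x) ≥ h(x̄) + (1/(2κ))·d(x; S)² for all x with ‖x − x̄‖ ≤ ε'. -/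
/-!
Run the proximal point method `x_{k+1} = argmin (h + c‖· - x_k‖²)` from `x`. Each step
decreases `h` by at least `2c‖x_k - x_{k+1}‖²`, does not move away from `xbar`, and
`2c (x_k - x_{k+1}) ∈ ∂h(x_{k+1})`, so subregularity bounds `d(x_{k+1}, S)` by
`2cκ‖x_k - x_{k+1}‖`. Together these make `d(x_k, S)² / 2 - (κ + 1/(4c)) h(x_k)`
nondecreasing, while `d(x_k, S) → 0`; hence `d(x, S)² / 2 ≤ (κ + 1/(4c)) (h x - h xbar)`,
and letting `c → ∞` gives the growth bound.
-/

open scoped RealInnerProductSpace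
open Metric Filter Topology Set

section Prox

variable {E : Type*} [NormedAddCommGroup E]

def IsProxPoint (h : E → ℝ) (c : ℝ) (w u : E) : Prop :=
  ∀ y, h u + c * ‖u - w‖ ^ 2 ≤ h y + c * ‖y - w‖ ^ 2

lemma exists_isProxPoint [ProperSpace E] {h : E → ℝ} (hcont : Continuous h) {m : ℝ}
    (hm : ∀ y, m ≤ h y) {c : ℝ} (hc : 0 < c) (w : E) : ∃ u, IsProxPoint h c w u := by
  have hcoercive : Tendsto (fun y => h y + c * ‖y - w‖ ^ 2) (cocompact E) atTop := by
    simp_rw [← dist_eq_norm]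
    exact tendsto_atTop_add_left_of_le _ m hm <| Tendsto.const_mul_atTop hc <|
      (tendsto_pow_atTop two_ne_zero).comp (tendsto_dist_right_cocompact_atTop w)
  exact (by fun_prop : Continuous fun y => h y + c * ‖y - w‖ ^ 2).exists_forall_le hcoercive

lemma exists_seq_isProxPoint [ProperSpace E] {h : E → ℝ} (hcont : Continuous h) {m : ℝ}
    (hm : ∀ y, m ≤ h y) {c : ℝ} (hc : 0 < c) (x₀ : E) :
    ∃ x : ℕ → E, x 0 = x₀ ∧ ∀ k, IsProxPoint h c (x k) (x (k + 1)) := by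
  choose P hP using exists_isProxPoint hcont hm hc
  refine ⟨fun k => P^[k] x₀, rfl, fun k => ?_⟩
  simp only [Function.iterate_succ_apply']
  exact hP _

namespace IsProxPoint

variable [InnerProductSpace ℝ E]
variable {h : E → ℝ} {c : ℝ} {w u : E}

lemma inner_le (hu : IsProxPoint h c w u) (hconv : ConvexOn ℝ univ h) (y : E) :
    ⟪(2 * c) • (w - u), y - u⟫ ≤ h y - h u := by
  set a := h y - h u - ⟪(2 * c) • (w - u), y - u⟫
  -- compare `u` with `u + t • (y - u)`, use convexity, divide by `t`, and let `t → 0`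
  have hseg : ∀ t ∈ Ioc (0 : ℝ) 1, 0 ≤ a + c * t * ‖y - u‖ ^ 2 := by
    rintro t ⟨ht0, ht1⟩
    have hmin := hu (u + t • (y - u))
    have hconv_t := hconv.2 (mem_univ u) (mem_univ y) (sub_nonneg.2 ht1) ht0.le (by ring)
    rw [show (1 - t) • u + t • y = u + t • (y - u) by module, smul_eq_mul, smul_eq_mul]
      at hconv_t
    have hnorm : ‖u + t • (y - u) - w‖ ^ 2
        = ‖u - w‖ ^ 2 - 2 * t * ⟪w - u, y - u⟫ + t ^ 2 * ‖y - u‖ ^ 2 := by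
      rw [show u + t • (y - u) - w = t • (y - u) - (w - u) by abel, norm_sub_sq_real,
        norm_smul, real_inner_smul_left, norm_sub_rev w u, Real.norm_eq_abs, abs_of_pos ht0,
        real_inner_comm]
      ring
    rw [hnorm] at hmin
    rw [← mul_nonneg_iff_of_pos_left ht0]
    simp only [a, real_inner_smul_left]
    nlinarith
  have hlim : Tendsto (fun t => a + c * t * ‖y - u‖ ^ 2) (𝓝[>] 0) (𝓝 a) := by
    have : Continuous fun t : ℝ => a + c * t * ‖y - u‖ ^ 2 := by fun_prop
    simpa using (this.tendsto 0).mono_left nhdsWithin_le_nhds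
  have := ge_of_tendsto hlim (eventually_of_mem (Ioc_mem_nhdsGT one_pos) hseg)
  linarith

lemma add_sq_norm_sub_le (hu : IsProxPoint h c w u) (hconv : ConvexOn ℝ univ h) (y : E) :
    h u + c * ‖u - w‖ ^ 2 + c * ‖y - u‖ ^ 2 ≤ h y + c * ‖y - w‖ ^ 2 := by
  have hsubgrad := hu.inner_le hconv y
  have hnorm : ‖y - w‖ ^ 2 = ‖y - u‖ ^ 2 - 2 * ⟪w - u, y - u⟫ + ‖u - w‖ ^ 2 := by
    rw [show y - w = (y - u) - (w - u) by abel, norm_sub_sq_real, real_inner_comm,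
      norm_sub_rev w u]
  rw [real_inner_smul_left] at hsubgrad
  rw [hnorm]
  linarith

lemma two_mul_sq_norm_sub_le (hu : IsProxPoint h c w u) (hconv : ConvexOn ℝ univ h) :
    2 * c * ‖w - u‖ ^ 2 ≤ h w - h u := by
  have := hu.add_sq_norm_sub_le hconv w
  rw [sub_self, norm_zero, norm_sub_rev] at this
  linarith

lemma norm_sub_le (hu : IsProxPoint h c w u) (hconv : ConvexOn ℝ univ h) (hc : 0 < c) {z : E}
    (hz : h z ≤ h u) : ‖u - z‖ ≤ ‖w - z‖ := by
  have := hu.add_sq_norm_sub_le hconv z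
  rw [norm_sub_rev z u, norm_sub_rev z w] at this
  refine (pow_le_pow_iff_left₀ (norm_nonneg _) (norm_nonneg _) two_ne_zero).1 ?_
  nlinarith [sq_nonneg ‖u - w‖]

end IsProxPoint

lemma sq_div_two_le_of_descent {a φ s : ℕ → ℝ} {m c κ : ℝ} (hc : 0 < c) (hκ : 0 ≤ κ)
    (ha : ∀ k, 0 ≤ a k) (hs : ∀ k, 0 ≤ s k) (hm : ∀ k, m ≤ φ k)
    (hdist : ∀ k, a k ≤ a (k + 1) + s k) (herr : ∀ k, a (k + 1) ≤ 2 * c * κ * s k)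
    (hdesc : ∀ k, 2 * c * s k ^ 2 ≤ φ k - φ (k + 1)) :
    a 0 ^ 2 / 2 ≤ (κ + 1 / (4 * c)) * (φ 0 - m) := by
  set K := κ + 1 / (4 * c)
  -- `(a k ^ 2 - a (k + 1) ^ 2) / 2 ≤ a (k + 1) * s k + s k ^ 2 / 2 ≤ K * (2 * c * s k ^ 2)`
  have hmono : Monotone fun k => a k ^ 2 / 2 - K * φ k := by
    refine monotone_nat_of_le_succ fun k => ?_
    have h1 : a k ^ 2 ≤ (a (k + 1) + s k) ^ 2 := pow_le_pow_left₀ (ha k) (hdist k) 2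
    have h2 : a (k + 1) * s k ≤ 2 * c * κ * s k * s k :=
      mul_le_mul_of_nonneg_right (herr k) (hs k)
    have h3 : K * (2 * c * s k ^ 2) ≤ K * (φ k - φ (k + 1)) :=
      mul_le_mul_of_nonneg_left (hdesc k) (by positivity)
    have h4 : K * (2 * c * s k ^ 2) = 2 * c * κ * s k ^ 2 + s k ^ 2 / 2 := by
      simp only [K]; field_simp; ring
    nlinarith
  have hsum : Summable fun k => s k ^ 2 := by
    refine summable_of_sum_range_le (c := (φ 0 - m) / (2 * c)) (fun k => sq_nonneg _) fun N => ?_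
    rw [le_div_iff₀ (by positivity), Finset.sum_mul]
    calc ∑ k ∈ Finset.range N, s k ^ 2 * (2 * c)
        ≤ ∑ k ∈ Finset.range N, (φ k - φ (k + 1)) :=
          Finset.sum_le_sum fun k _ => by linarith [hdesc k]
      _ = φ 0 - φ N := Finset.sum_range_sub' φ N
      _ ≤ φ 0 - m := by linarith [hm N]
  have ha_lim : Tendsto (fun k => a (k + 1) ^ 2) atTop (𝓝 0) := by
    have := hsum.tendsto_atTop_zero.const_mul ((2 * c * κ) ^ 2)
    rw [mul_zero] at this
    refine squeeze_zero (fun k => sq_nonneg _) (fun k => ?_) this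
    rw [← mul_pow]
    exact pow_le_pow_left₀ (ha _) (herr k) 2
  have hlim : Tendsto (fun k => a (k + 1) ^ 2 / 2 - K * m) atTop (𝓝 (-(K * m))) := by
    simpa using (ha_lim.div_const 2).sub_const (K * m)
  have : a 0 ^ 2 / 2 - K * φ 0 ≤ -(K * m) := by
    refine ge_of_tendsto' hlim fun k => (hmono (Nat.zero_le (k + 1))).trans ?_
    have : K * m ≤ K * φ (k + 1) := mul_le_mul_of_nonneg_left (hm _) (by positivity)
    simp only
    linarith
  linarith

variable [InnerProductSpace ℝ E]

lemma infDist_sq_div_two_le_of_isProxPoint {h : E → ℝ} (hconv : ConvexOn ℝ univ h) {S : Set E}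
    {xbar : E} (hmin : ∀ y, h xbar ≤ h y) {κ ε c : ℝ} (hκ : 0 ≤ κ) (hc : 0 < c)
    (hsub : ∀ x v : E, ‖x - xbar‖ ≤ ε → (∀ y, ⟪v, y - x⟫ ≤ h y - h x) →
      infDist x S ≤ κ * ‖v‖)
    {x : ℕ → E} (hx : ∀ k, IsProxPoint h c (x k) (x (k + 1))) (hx0 : ‖x 0 - xbar‖ ≤ ε) :
    infDist (x 0) S ^ 2 / 2 ≤ (κ + 1 / (4 * c)) * (h (x 0) - h xbar) := by
  have hball : ∀ k, ‖x k - xbar‖ ≤ ε :=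
    Nat.rec hx0 fun k ih => ((hx k).norm_sub_le hconv hc (hmin _)).trans ih
  refine sq_div_two_le_of_descent (s := fun k => ‖x k - x (k + 1)‖) hc hκ
    (fun _ => infDist_nonneg) (fun _ => norm_nonneg _) (fun _ => hmin _) (fun k => ?_)
    (fun k => ?_) (fun k => (hx k).two_mul_sq_norm_sub_le hconv)
  · simpa [dist_eq_norm] using infDist_le_infDist_add_dist (x := x k) (y := x (k + 1)) (s := S)
  · have := hsub _ _ (hball (k + 1)) ((hx k).inner_le hconv)
    rw [norm_smul, Real.norm_of_nonneg (by positivity)] at this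
    linarith

end Prox

/-- Metric subregularity of the subdifferential at a minimizer implies the
second-order growth condition with constant `c = κ⁻¹`. -/
theorem stmt_0 (n : ℕ) (h : EuclideanSpace ℝ (Fin n) → ℝ)
    (hconv : ConvexOn ℝ Set.univ h)
    (S : Set (EuclideanSpace ℝ (Fin n)))
    (hS : S = {z | ∀ y, h z ≤ h y})
    (xbar : EuclideanSpace ℝ (Fin n)) (hxbar : xbar ∈ S)
    (κ : ℝ) (hκ : 0 < κ) (ε : ℝ) (hε : 0 < ε)
    (hsub : ∀ x v : EuclideanSpace ℝ (Fin n), ‖x - xbar‖ ≤ ε →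
      (∀ y, ⟪v, y - x⟫ ≤ h y - h x) → Metric.infDist x S ≤ κ * ‖v‖) :
    ∃ ε' > 0, ∀ x : EuclideanSpace ℝ (Fin n), ‖x - xbar‖ ≤ ε' →
      h x ≥ h xbar + (1 / (2 * κ)) * (Metric.infDist x S) ^ 2 := by
  have hmin : ∀ y, h xbar ≤ h y := by rwa [hS] at hxbar
  refine ⟨ε, hε, fun x hx => ?_⟩
  have hbound : ∀ c > 0, infDist x S ^ 2 / 2 ≤ (κ + 1 / (4 * c)) * (h x - h xbar) := by
    intro c hc
    obtain ⟨seq, rfl, hseq⟩ := exists_seq_isProxPoint hconv.locallyLipschitz.continuous hmin hc x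
    exact infDist_sq_div_two_le_of_isProxPoint hconv hmin hκ.le hc hsub hseq hx
  have hlim : Tendsto (fun c => (κ + 1 / (4 * c)) * (h x - h xbar)) atTop
      (𝓝 (κ * (h x - h xbar))) := by
    have : Tendsto (fun c : ℝ => 1 / (4 * c)) atTop (𝓝 0) :=
      tendsto_const_nhds.div_atTop (tendsto_id.const_mul_atTop four_pos)
    simpa using (this.const_add κ).mul_const (h x - h xbar)
  have hgrowth : infDist x S ^ 2 / 2 ≤ κ * (h x - h xbar) :=
    ge_of_tendsto hlim ((eventually_gt_atTop 0).mono hbound)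
  rw [ge_iff_le, ← le_sub_iff_add_le', one_div_mul_eq_div, div_le_iff₀ (by positivity)]
  linarith
end

section
/- Let h : ℝⁿ → ℝ be a convex function, let S := {z ∈ ℝⁿ : h attains its minimum at z} and let x̄ ∈ S. Suppose there exist c, ε > 0 such that h(x) ≥ h(x̄) + (c/2)·d(x; S)² for all x with ‖x − x̄‖ ≤ ε. Then ∂h is metrically subregular at x̄ for 0 with modulus κ = 2/c: there exists ε' > 0 such that for every x with ‖x − x̄‖ ≤ ε' and every v ∈ ∂h(x) one has d(x; S) ≤ (2/c)‖v‖. -/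
open scoped RealInnerProductSpace

/-!
If `v` is a subgradient of `h` at `x` and `p` is a minimizer, then
`h x - h p ≤ ⟪v, x - p⟫ ≤ ‖v‖ * dist x p`. Near `x̄` the growth condition bounds the left-hand
side below by `(c/2) d(x; S)²`; taking the infimum over `p ∈ S` gives
`(c/2) d(x; S)² ≤ ‖v‖ d(x; S)`, i.e. `d(x; S) ≤ (2/c) ‖v‖`.
-/

namespace Metric

theorem le_mul_infDist_of_forall_le_mul_dist {α : Type*} [PseudoMetricSpace α] {s : Set α}
    (hs : s.Nonempty) {x : α} {a k : ℝ} (hk : 0 ≤ k) (h : ∀ y ∈ s, a ≤ k * dist x y) :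
    a ≤ k * infDist x s := by
  rcases hk.eq_or_lt with rfl | hk
  · obtain ⟨y, hy⟩ := hs
    simpa using h y hy
  · rw [← div_le_iff₀' hk, le_infDist hs]
    exact fun y hy => (div_le_iff₀' hk).2 (h y hy)

end Metric

section Subgradient

variable {E : Type*} [NormedAddCommGroup E] [InnerProductSpace ℝ E]

theorem sub_le_norm_mul_dist_of_subgradient {f : E → ℝ} {x v : E}
    (hv : ∀ y, ⟪v, y - x⟫ ≤ f y - f x) (y : E) : f x - f y ≤ ‖v‖ * dist x y := by
  calc f x - f y ≤ ⟪v, x - y⟫ := by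
        have := hv y
        rw [← neg_sub x y, inner_neg_right] at this
        linarith
    _ ≤ ‖v‖ * ‖x - y‖ := real_inner_le_norm v (x - y)
    _ = ‖v‖ * dist x y := by rw [dist_eq_norm]

theorem infDist_le_of_subgradient_of_quadratic_growth {f : E → ℝ} {S : Set E}
    (hS : S.Nonempty) {m c : ℝ} (hc : 0 < c) (hmin : ∀ p ∈ S, f p ≤ m) {x v : E}
    (hgrow : m + (c / 2) * Metric.infDist x S ^ 2 ≤ f x)
    (hv : ∀ y, ⟪v, y - x⟫ ≤ f y - f x) :
    Metric.infDist x S ≤ (2 / c) * ‖v‖ := by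
  set d := Metric.infDist x S
  have hd : 0 ≤ d := Metric.infDist_nonneg
  have key : (c / 2) * d ^ 2 ≤ ‖v‖ * d :=
    Metric.le_mul_infDist_of_forall_le_mul_dist hS (norm_nonneg v) fun p hp => by
      linarith [hmin p hp, sub_le_norm_mul_dist_of_subgradient hv p]
  rcases hd.eq_or_lt with hd0 | hdpos
  · rw [← hd0]; positivity
  · rw [div_mul_eq_mul_div, le_div_iff₀ hc]
    nlinarith

end Subgradient

theorem stmt_1_general (n : ℕ) (h : EuclideanSpace ℝ (Fin n) → ℝ)
    (S : Set (EuclideanSpace ℝ (Fin n)))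
    (hS : S = {z | ∀ y, h z ≤ h y})
    (xbar : EuclideanSpace ℝ (Fin n)) (hxbar : xbar ∈ S)
    (c ε : ℝ) (hc : 0 < c) (hε : 0 < ε)
    (hgrow : ∀ x : EuclideanSpace ℝ (Fin n), ‖x - xbar‖ ≤ ε →
      h x ≥ h xbar + (c / 2) * (Metric.infDist x S) ^ 2) :
    ∃ ε' > 0, ∀ x v : EuclideanSpace ℝ (Fin n), ‖x - xbar‖ ≤ ε' →
      (∀ y, ⟪v, y - x⟫ ≤ h y - h x) → Metric.infDist x S ≤ (2 / c) * ‖v‖ := by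
  have hmin : ∀ p ∈ S, h p ≤ h xbar := fun p hp => by
    rw [hS] at hp
    exact hp xbar
  exact ⟨ε, hε, fun x v hx hv =>
    infDist_le_of_subgradient_of_quadratic_growth ⟨xbar, hxbar⟩ hc hmin (hgrow x hx) hv⟩

/-- The second-order growth condition at a minimizer implies metric subregularity
of the subdifferential with modulus `κ = 2/c`. -/
theorem stmt_1 (n : ℕ) (h : EuclideanSpace ℝ (Fin n) → ℝ)
    (hconv : ConvexOn ℝ Set.univ h)
    (S : Set (EuclideanSpace ℝ (Fin n)))
    (hS : S = {z | ∀ y, h z ≤ h y})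
    (xbar : EuclideanSpace ℝ (Fin n)) (hxbar : xbar ∈ S)
    (c ε : ℝ) (hc : 0 < c) (hε : 0 < ε)
    (hgrow : ∀ x : EuclideanSpace ℝ (Fin n), ‖x - xbar‖ ≤ ε →
      h x ≥ h xbar + (c / 2) * (Metric.infDist x S) ^ 2) :
    ∃ ε' > 0, ∀ x v : EuclideanSpace ℝ (Fin n), ‖x - xbar‖ ≤ ε' →
      (∀ y, ⟪v, y - x⟫ ≤ h y - h x) → Metric.infDist x S ≤ (2 / c) * ‖v‖ :=
  stmt_1_general n h S hS xbar hxbar c ε hc hε hgrow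
end

section
/- Let h : ℝⁿ → ℝ be a convex function, let S := {z ∈ ℝⁿ : h attains its minimum at z} and let x̄ ∈ S. Suppose ∂h is strongly metrically subregular at x̄ for 0 with modulus κ > 0, meaning: there exists ε > 0 such that (a) for every x with ‖x − x̄‖ ≤ ε and every v ∈ ∂h(x) one has d(x; S) ≤ κ‖v‖, and (b) x̄ is the only point of S in the ball of radius ε around x̄. Then there exists η > 0 such that h(x) ≥ h(x̄) + (1/(2κ))·‖x − x̄‖² for all x with ‖x − x̄‖ ≤ η; moreover S = {x̄}, i.e. x̄ is the unique minimizer of h. -/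
/-!
The minimizers of `h` form a convex set in which `xbar` is isolated, so `S = {xbar}` and
subregularity reads `‖x - xbar‖ ≤ κ ‖v‖` for `v ∈ ∂h(x)`. A minimizer `w` of `h` on the ball
`closedBall x s` carries a subgradient `v` with `s ‖v‖ ≤ ⟪v, x - w⟫`, so the minimal value of
`h` on `closedBall x s` decreases in `s` at rate at least `‖v‖ ≥ (‖x - xbar‖ - s) / κ`.
Integrating from `s = 0` to `s = ‖x - xbar‖` gives `h x - h xbar ≥ ‖x - xbar‖ ^ 2 / (2 κ)`.
-/

open scoped RealInnerProductSpace
open Metric Set Filter Topology Finset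

theorem Convex.eq_singleton_of_isolated {F : Type*} [NormedAddCommGroup F] [NormedSpace ℝ F]
    {S : Set F} (hS : Convex ℝ S) {xbar : F} (hxbar : xbar ∈ S) {ε : ℝ} (hε : 0 < ε)
    (hiso : ∀ z ∈ S, ‖z - xbar‖ ≤ ε → z = xbar) : S = {xbar} := by
  refine Set.eq_singleton_iff_unique_mem.2 ⟨hxbar, fun z hz => ?_⟩
  by_contra hne
  have hd : 0 < ‖z - xbar‖ := norm_pos_iff.2 (sub_ne_zero.2 hne)
  set t := min 1 (ε / ‖z - xbar‖)
  have ht : 0 < t := lt_min one_pos (div_pos hε hd)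
  have hp : xbar + t • (z - xbar) ∈ S := hS.add_smul_sub_mem hxbar hz ⟨ht.le, min_le_left _ _⟩
  have hpε : ‖xbar + t • (z - xbar) - xbar‖ ≤ ε := by
    rw [add_sub_cancel_left, norm_smul, Real.norm_of_nonneg ht.le, ← le_div_iff₀ hd]
    exact min_le_right _ _
  have := hiso _ hp hpε
  simp_all

section Subgradient

variable {E : Type*} [NormedAddCommGroup E] [InnerProductSpace ℝ E]

def IsSubgradient (h : E → ℝ) (x v : E) : Prop :=
  ∀ y, ⟪v, y - x⟫ ≤ h y - h x

def IsStronglyMetricallySubregular (h : E → ℝ) (xbar : E) (κ ε : ℝ) : Prop :=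
  ∀ x v, ‖x - xbar‖ ≤ ε → IsSubgradient h x v → ‖x - xbar‖ ≤ κ * ‖v‖

theorem ConvexOn.convex_setOf_forall_le {h : E → ℝ} (hh : ConvexOn ℝ univ h) :
    Convex ℝ {z | ∀ y, h z ≤ h y} := by
  simpa only [ofPred_forall] using convex_iInter fun y => by simpa using hh.convex_le (h y)

/-- The optimality condition `0 ∈ ∂h(w) + N_C(w)`, obtained by separating the strict epigraph
of `h` from `C × {h w}`. -/
theorem ConvexOn.exists_isSubgradient_of_isMinOn [CompleteSpace E] {h : E → ℝ}
    (hh : ConvexOn ℝ univ h) (hcont : Continuous h) {C : Set E} (hC : Convex ℝ C) {w : E}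
    (hw : w ∈ C) (hmin : IsMinOn h C w) :
    ∃ v, IsSubgradient h w v ∧ ∀ b ∈ C, ⟪v, w⟫ ≤ ⟪v, b⟫ := by
  have hA : IsOpen {p : E × ℝ | h p.1 < p.2} := isOpen_lt (by fun_prop) continuous_snd
  have hdisj : Disjoint {p : E × ℝ | h p.1 < p.2} (C ×ˢ {h w}) := by
    rw [Set.disjoint_left]
    rintro ⟨y, t⟩ hy ⟨hyC, rfl⟩
    exact (hmin hyC).not_gt (by simpa using hy)
  obtain ⟨f, u, hfA, hfC⟩ := geometric_hahn_banach_open (by simpa using hh.convex_strict_epigraph)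
    hA (hC.prod (convex_singleton _)) hdisj
  set g := f.comp (ContinuousLinearMap.inl ℝ E ℝ)
  set β := f (0, 1)
  have hsplit : ∀ y t, f (y, t) = g y + t * β := fun y t => by
    rw [← smul_eq_mul, ← map_smul, ContinuousLinearMap.comp_apply, ← map_add]; simp
  have hepi : ∀ y, f (y, h y) ≤ u := fun y =>
    le_of_tendsto (x := 𝓝[>] (h y))
      (((by fun_prop : Continuous fun t => f (y, t)).tendsto (h y)).mono_left nhdsWithin_le_nhds)
      (eventually_nhdsWithin_of_forall fun t ht => (hfA (y, t) ht).le)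
  have hsep : ∀ y, ∀ b ∈ C, g y + h y * β ≤ g b + h w * β := fun y b hb => by
    rw [← hsplit, ← hsplit]; exact (hepi y).trans (hfC _ ⟨hb, rfl⟩)
  have hβ : β < 0 := by
    have := (hfA (w, h w + 1) (by simp)).trans_le (hfC (w, h w) ⟨hw, rfl⟩)
    rw [hsplit, hsplit] at this
    linarith
  set v := (-β)⁻¹ • (InnerProductSpace.toDual ℝ E).symm g
  have hv : ∀ y, ⟪v, y⟫ = g y / -β := fun y => by
    rw [real_inner_smul_left, InnerProductSpace.toDual_symm_apply, inv_mul_eq_div]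
  refine ⟨v, fun y => ?_, fun b hb => ?_⟩
  · rw [inner_sub_right, hv, hv, ← sub_div, div_le_iff₀ (neg_pos.2 hβ)]
    linarith [hsep y w hw]
  · rw [hv, hv]
    exact div_le_div_of_nonneg_right (by linarith [hsep w b hb]) (neg_pos.2 hβ).le

theorem ConvexOn.exists_isSubgradient_of_isMinOn_closedBall [CompleteSpace E] {h : E → ℝ}
    (hh : ConvexOn ℝ univ h) (hcont : Continuous h) {x w : E} {s : ℝ}
    (hw : w ∈ closedBall x s) (hmin : IsMinOn h (closedBall x s) w) :
    ∃ v, IsSubgradient h w v ∧ s * ‖v‖ ≤ ⟪v, x - w⟫ := by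
  obtain ⟨v, hv, hnormal⟩ :=
    hh.exists_isSubgradient_of_isMinOn hcont (convex_closedBall x s) hw hmin
  have hs : 0 ≤ s := nonempty_closedBall.1 ⟨w, hw⟩
  refine ⟨v, hv, ?_⟩
  rcases eq_or_ne v 0 with rfl | hv0
  · simp
  have hb : x - (s / ‖v‖) • v ∈ closedBall x s := by
    rw [mem_closedBall, dist_eq_norm, sub_sub_cancel_left, norm_neg, norm_smul,
      Real.norm_of_nonneg (by positivity), div_mul_cancel₀ _ (norm_ne_zero_iff.2 hv0)]
  have := hnormal _ hb
  rw [inner_sub_right, real_inner_smul_right, real_inner_self_eq_norm_sq] at this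
  have hsq : s / ‖v‖ * ‖v‖ ^ 2 = s * ‖v‖ := by field_simp
  rw [inner_sub_right]
  linarith

section FiniteDimensional

variable [FiniteDimensional ℝ E] {h : E → ℝ} {xbar : E} {κ ε : ℝ}

theorem IsStronglyMetricallySubregular.add_le_of_isMinOn_closedBall
    (hsub : IsStronglyMetricallySubregular h xbar κ ε) (hκ : 0 < κ) (hh : ConvexOn ℝ univ h)
    {x w w' : E} {s s' : ℝ} (hss' : s ≤ s') (hs'ε : ‖x - xbar‖ + s' ≤ ε)
    (hw : w ∈ closedBall x s) (hw' : w' ∈ closedBall x s')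
    (hmin : IsMinOn h (closedBall x s') w') :
    h w' + (s' - s) * (‖x - xbar‖ - s') / κ ≤ h w := by
  obtain ⟨v, hv, hvx⟩ :=
    hh.exists_isSubgradient_of_isMinOn_closedBall hh.locallyLipschitz.continuous hw' hmin
  rw [mem_closedBall, dist_eq_norm] at hw hw'
  have hgrad : (‖x - xbar‖ - s') / κ ≤ ‖v‖ := by
    have hw'xbar := norm_sub_le_norm_sub_add_norm_sub w' x xbar
    have hxw' := norm_sub_le_norm_sub_add_norm_sub x w' xbar
    rw [norm_sub_rev x w'] at hxw'
    rw [div_le_iff₀' hκ]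
    linarith [hsub w' v (by linarith) hv]
  have hwx : ⟪v, x - w⟫ ≤ s * ‖v‖ :=
    (real_inner_le_norm v (x - w)).trans (by rw [mul_comm, norm_sub_rev]; gcongr)
  have hdesc : (s' - s) * ‖v‖ ≤ h w - h w' := by
    have := hv w
    rw [show w - w' = (x - w') - (x - w) by abel, inner_sub_right] at this
    linarith
  calc h w' + (s' - s) * (‖x - xbar‖ - s') / κ
      ≤ h w' + (s' - s) * ‖v‖ := by
        rw [mul_div_assoc]; gcongr
    _ ≤ h w := by linarith

/-- Descending through the balls of radii `i * Δ`, `Δ = ‖x - xbar‖ / (N + 1)`, collects a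
Riemann sum of `∫₀^‖x - xbar‖ (‖x - xbar‖ - t) / κ dt`. -/
theorem IsStronglyMetricallySubregular.add_natCast_div_succ_mul_le
    (hsub : IsStronglyMetricallySubregular h xbar κ ε) (hκ : 0 < κ) (hh : ConvexOn ℝ univ h)
    (hmin : ∀ y, h xbar ≤ h y) {x : E} (hx : 2 * ‖x - xbar‖ ≤ ε) (N : ℕ) :
    h xbar + N / (N + 1) * (‖x - xbar‖ ^ 2 / (2 * κ)) ≤ h x := by
  set r := ‖x - xbar‖
  set Δ := r / (N + 1)
  have hΔ : (N + 1) * Δ = r := by simp only [Δ]; field_simp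
  have hΔ0 : 0 ≤ Δ := by positivity
  have hex : ∀ i : ℕ, ∃ w ∈ closedBall x (i * Δ), IsMinOn h (closedBall x (i * Δ)) w :=
    fun i => (isCompact_closedBall x _).exists_isMinOn ⟨x, mem_closedBall_self (by positivity)⟩
      hh.locallyLipschitz.continuous.continuousOn
  choose w hw hwmin using hex
  have hstep : ∀ i ∈ range (N + 1), Δ * (r - (i + 1) * Δ) / κ ≤ h (w i) - h (w (i + 1)) := by
    intro i hi
    have hiN : (i + 1 : ℝ) ≤ N + 1 := by exact_mod_cast mem_range.1 hi
    have hir : (i + 1) * Δ ≤ r := by rw [← hΔ]; gcongr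
    have := hsub.add_le_of_isMinOn_closedBall hκ hh (s' := ((i + 1 : ℕ) : ℝ) * Δ)
      (by gcongr; simp) (by push_cast; linarith) (hw i) (hw (i + 1)) (hwmin (i + 1))
    rw [show ((i + 1 : ℕ) : ℝ) * Δ - i * Δ = Δ by push_cast; ring, Nat.cast_succ] at this
    linarith
  have hsum : ∀ n : ℕ, ∑ i ∈ range n, Δ * (r - (i + 1) * Δ) / κ
      = (n * r - n * (n + 1) / 2 * Δ) * Δ / κ := by
    intro n
    induction n with
    | zero => simp
    | succ n ih => rw [sum_range_succ, ih]; push_cast; ring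
  have htele := sum_le_sum hstep
  rw [sum_range_sub', hsum] at htele
  have hclosed : ((N + 1 : ℕ) * r - (N + 1 : ℕ) * ((N + 1 : ℕ) + 1) / 2 * Δ) * Δ / κ
      = N / (N + 1) * (r ^ 2 / (2 * κ)) := by
    simp only [Δ]; push_cast; field_simp; ring
  have h0 : h (w 0) ≤ h x := hwmin 0 (mem_closedBall_self (by simp))
  linarith [hmin (w (N + 1))]

theorem IsStronglyMetricallySubregular.quadratic_growth
    (hsub : IsStronglyMetricallySubregular h xbar κ ε) (hκ : 0 < κ) (hh : ConvexOn ℝ univ h)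
    (hmin : ∀ y, h xbar ≤ h y) {x : E} (hx : 2 * ‖x - xbar‖ ≤ ε) :
    h xbar + ‖x - xbar‖ ^ 2 / (2 * κ) ≤ h x := by
  have hlim := ((tendsto_natCast_div_add_atTop (1 : ℝ)).mul_const
    (‖x - xbar‖ ^ 2 / (2 * κ))).const_add (h xbar)
  rw [one_mul] at hlim
  exact le_of_tendsto' hlim (hsub.add_natCast_div_succ_mul_le hκ hh hmin hx)

end FiniteDimensional

end Subgradient

/-- Strong metric subregularity of the subdifferential at a minimizer implies the
pointwise second-order growth condition with constant `κ⁻¹`, and uniqueness of the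
minimizer. -/
theorem stmt_2 (n : ℕ) (h : EuclideanSpace ℝ (Fin n) → ℝ)
    (hconv : ConvexOn ℝ Set.univ h)
    (S : Set (EuclideanSpace ℝ (Fin n)))
    (hS : S = {z | ∀ y, h z ≤ h y})
    (xbar : EuclideanSpace ℝ (Fin n)) (hxbar : xbar ∈ S)
    (κ : ℝ) (hκ : 0 < κ) (ε : ℝ) (hε : 0 < ε)
    (hsub : ∀ x v : EuclideanSpace ℝ (Fin n), ‖x - xbar‖ ≤ ε →
      (∀ y, ⟪v, y - x⟫ ≤ h y - h x) → Metric.infDist x S ≤ κ * ‖v‖)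
    (hiso : ∀ z ∈ S, ‖z - xbar‖ ≤ ε → z = xbar) :
    (∃ η > 0, ∀ x : EuclideanSpace ℝ (Fin n), ‖x - xbar‖ ≤ η →
      h x ≥ h xbar + (1 / (2 * κ)) * ‖x - xbar‖ ^ 2) ∧ S = {xbar} := by
  subst hS
  have hSeq := hconv.convex_setOf_forall_le.eq_singleton_of_isolated hxbar hε hiso
  have hsr : IsStronglyMetricallySubregular h xbar κ ε := fun x v hx hv => by
    simpa [hSeq, infDist_singleton, dist_eq_norm] using hsub x v hx hv
  refine ⟨⟨ε / 2, by positivity, fun x hx => ?_⟩, hSeq⟩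
  simpa only [ge_iff_le, one_div_mul_eq_div] using
    hsr.quadratic_growth hκ hconv hxbar (by linarith : 2 * ‖x - xbar‖ ≤ ε)
end

section
/- Let h : ℝⁿ → ℝ be a convex function, let S := {z ∈ ℝⁿ : h attains its minimum at z}, let x̄ ∈ S, and write h* := h(x̄). Suppose there exist c, ν > 0 such that h(x) ≥ h(x̄) + (c/2)·d(x; S)² for all x in the sublevel set {x : h(x) < h* + ν}. Then, with η := √(2ν/c), the same inequality h(x) ≥ h(x̄) + (c/2)·d(x; S)² holds for all x with ‖x − x̄‖ ≤ η. -/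
open Metric

theorem half_mul_sq_infDist_le_of_dist_le_sqrt {α : Type*} [PseudoMetricSpace α] {s : Set α}
    {x y : α} (hy : y ∈ s) {c ν : ℝ} (hc : 0 < c) (hν : 0 ≤ ν)
    (hxy : dist x y ≤ √(2 * ν / c)) :
    c / 2 * infDist x s ^ 2 ≤ ν := by
  have hdist : infDist x s ≤ √(2 * ν / c) := (infDist_le_dist_of_mem hy).trans hxy
  calc c / 2 * infDist x s ^ 2
      ≤ c / 2 * √(2 * ν / c) ^ 2 := by gcongr; exact infDist_nonneg
    _ = ν := by rw [Real.sq_sqrt (by positivity)]; field_simp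

theorem stmt_3_general (n : ℕ) (h : EuclideanSpace ℝ (Fin n) → ℝ)
    (S : Set (EuclideanSpace ℝ (Fin n)))
    (xbar : EuclideanSpace ℝ (Fin n)) (hxbar : xbar ∈ S)
    (c ν : ℝ) (hc : 0 < c) (hν : 0 < ν)
    (hgrow : ∀ x : EuclideanSpace ℝ (Fin n), h x < h xbar + ν →
      h x ≥ h xbar + (c / 2) * (Metric.infDist x S) ^ 2) :
    ∀ x : EuclideanSpace ℝ (Fin n), ‖x - xbar‖ ≤ Real.sqrt (2 * ν / c) →
      h x ≥ h xbar + (c / 2) * (Metric.infDist x S) ^ 2 := by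
  intro x hx
  rcases lt_or_ge (h x) (h xbar + ν) with hsub | hsuper
  · exact hgrow x hsub
  · have := half_mul_sq_infDist_le_of_dist_le_sqrt hxbar hc hν.le (by rwa [dist_eq_norm])
    linarith

/-- Quadratic growth on a sublevel set implies quadratic growth on a ball of
radius `η = √(2ν/c)` around the minimizer. -/
theorem stmt_3 (n : ℕ) (h : EuclideanSpace ℝ (Fin n) → ℝ)
    (hconv : ConvexOn ℝ Set.univ h)
    (S : Set (EuclideanSpace ℝ (Fin n)))
    (hS : S = {z | ∀ y, h z ≤ h y})
    (xbar : EuclideanSpace ℝ (Fin n)) (hxbar : xbar ∈ S)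
    (c ν : ℝ) (hc : 0 < c) (hν : 0 < ν)
    (hgrow : ∀ x : EuclideanSpace ℝ (Fin n), h x < h xbar + ν →
      h x ≥ h xbar + (c / 2) * (Metric.infDist x S) ^ 2) :
    ∀ x : EuclideanSpace ℝ (Fin n), ‖x - xbar‖ ≤ Real.sqrt (2 * ν / c) →
      h x ≥ h xbar + (c / 2) * (Metric.infDist x S) ^ 2 :=
  stmt_3_general n h S xbar hxbar c ν hc hν hgrow
end

section
/- Let s ⊆ ℝⁿ be a nonempty convex set, let g : ℝⁿ → ℝ be convex on s, let x, v ∈ ℝⁿ, and let 0 < α₁ ≤ α₂. Suppose z₁, z₂ ∈ s satisfy, for i = 1, 2, the variational inequality g(zᵢ) + (1/αᵢ)·⟨x − αᵢ·v − zᵢ, y − zᵢ⟩ ≤ g(y) for all y ∈ s (i.e. zᵢ = prox_{αᵢ g}(x − αᵢ v) = J(x, αᵢ), the forward-backward point with step αᵢ and gradient v). Then (α₂/α₁)·‖x − z₁‖ ≥ ‖x − z₂‖ ≥ ‖x − z₁‖. -/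
/-!
Testing the variational inequality of `z₁` at `z₂` and that of `z₂` at `z₁` and adding, the values
of `g` and the gradient terms cancel, leaving, with `p = x - z₁` and `q = x - z₂`,
`α₂ ⟪p, p - q⟫ + α₁ ⟪q, q - p⟫ ≤ 0`. By Cauchy–Schwarz this gives
`(α₂ ‖p‖ - α₁ ‖q‖) (‖p‖ - ‖q‖) ≤ 0`, and since `α₁ ≤ α₂` the two factors cannot both be positive
or both be negative.
-/

open scoped RealInnerProductSpace

lemma le_and_mul_le_of_mul_sub_mul_nonpos {a b α₁ α₂ : ℝ} (ha : 0 ≤ a) (hα₁ : 0 < α₁)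
    (hα₁₂ : α₁ ≤ α₂) (h : (α₂ * a - α₁ * b) * (a - b) ≤ 0) : a ≤ b ∧ α₁ * b ≤ α₂ * a := by
  have hα_a : α₁ * a ≤ α₂ * a := mul_le_mul_of_nonneg_right hα₁₂ ha
  constructor
  · by_contra! hba
    have : α₁ * b < α₁ * a := mul_lt_mul_of_pos_left hba hα₁
    nlinarith
  · by_contra! hab
    have : a < b := lt_of_mul_lt_mul_left (hα_a.trans_lt hab) hα₁.le
    nlinarith

section InnerProductSpace

variable {E : Type*} [NormedAddCommGroup E] [InnerProductSpace ℝ E]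

lemma norm_le_norm_and_mul_norm_le_of_inner_sub_nonpos {p q : E} {α₁ α₂ : ℝ} (hα₁ : 0 < α₁)
    (hα₁₂ : α₁ ≤ α₂) (h : α₂ * ⟪p, p - q⟫ + α₁ * ⟪q, q - p⟫ ≤ 0) :
    ‖p‖ ≤ ‖q‖ ∧ α₁ * ‖q‖ ≤ α₂ * ‖p‖ := by
  rw [inner_sub_right, inner_sub_right, real_inner_self_eq_norm_sq, real_inner_self_eq_norm_sq,
    real_inner_comm p q] at h
  have hcs : ⟪p, q⟫ ≤ ‖p‖ * ‖q‖ := real_inner_le_norm p q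
  refine le_and_mul_le_of_mul_sub_mul_nonpos (norm_nonneg p) hα₁ hα₁₂ ?_
  nlinarith [mul_le_mul_of_nonneg_left hcs (by linarith : 0 ≤ α₁ + α₂)]

lemma inner_sub_add_inner_sub_nonpos_of_forwardBackward {s : Set E} {g : E → ℝ} {x v z₁ z₂ : E}
    {α₁ α₂ : ℝ} (hα₁ : 0 < α₁) (hα₂ : 0 < α₂) (hz₁ : z₁ ∈ s) (hz₂ : z₂ ∈ s)
    (hvi₁ : ∀ y ∈ s, g z₁ + (1 / α₁) * ⟪x - α₁ • v - z₁, y - z₁⟫ ≤ g y)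
    (hvi₂ : ∀ y ∈ s, g z₂ + (1 / α₂) * ⟪x - α₂ • v - z₂, y - z₂⟫ ≤ g y) :
    α₂ * ⟪x - z₁, z₂ - z₁⟫ + α₁ * ⟪x - z₂, z₁ - z₂⟫ ≤ 0 := by
  have h₁ := hvi₁ z₂ hz₂
  have h₂ := hvi₂ z₁ hz₁
  rw [sub_right_comm, inner_sub_left, real_inner_smul_left] at h₁ h₂
  have hv : ⟪v, z₁ - z₂⟫ = -⟪v, z₂ - z₁⟫ := by rw [← inner_neg_right, neg_sub]
  rw [hv, mul_neg, sub_neg_eq_add] at h₂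
  simp only [one_div, mul_sub, mul_add, inv_mul_cancel_left₀ hα₁.ne',
    inv_mul_cancel_left₀ hα₂.ne'] at h₁ h₂
  have hsum : α₁⁻¹ * ⟪x - z₁, z₂ - z₁⟫ + α₂⁻¹ * ⟪x - z₂, z₁ - z₂⟫ ≤ 0 := by linarith
  have hscaled := mul_nonpos_of_nonneg_of_nonpos (mul_pos hα₁ hα₂).le hsum
  field_simp at hscaled
  linarith

end InnerProductSpace

theorem stmt_5_general (n : ℕ) (s : Set (EuclideanSpace ℝ (Fin n)))
    (g : EuclideanSpace ℝ (Fin n) → ℝ)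
    (x v : EuclideanSpace ℝ (Fin n))
    (α₁ α₂ : ℝ) (hα₁ : 0 < α₁) (hα₁₂ : α₁ ≤ α₂)
    (z₁ z₂ : EuclideanSpace ℝ (Fin n)) (hz₁ : z₁ ∈ s) (hz₂ : z₂ ∈ s)
    (hvi₁ : ∀ y ∈ s, g z₁ + (1 / α₁) * ⟪x - α₁ • v - z₁, y - z₁⟫ ≤ g y)
    (hvi₂ : ∀ y ∈ s, g z₂ + (1 / α₂) * ⟪x - α₂ • v - z₂, y - z₂⟫ ≤ g y) :
    (α₂ / α₁) * ‖x - z₁‖ ≥ ‖x - z₂‖ ∧ ‖x - z₂‖ ≥ ‖x - z₁‖ := by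
  have hmono := inner_sub_add_inner_sub_nonpos_of_forwardBackward hα₁ (hα₁.trans_le hα₁₂)
    hz₁ hz₂ hvi₁ hvi₂
  rw [← sub_sub_sub_cancel_left z₁ z₂ x, ← sub_sub_sub_cancel_left z₂ z₁ x] at hmono
  obtain ⟨hle, hmul⟩ := norm_le_norm_and_mul_norm_le_of_inner_sub_nonpos hα₁ hα₁₂ hmono
  refine ⟨?_, hle⟩
  rwa [ge_iff_le, div_mul_eq_mul_div, le_div_iff₀ hα₁, mul_comm]

/-- Monotonicity properties of the forward-backward step lengths: if
`zᵢ = prox_{αᵢ g}(x − αᵢ v)` for `0 < α₁ ≤ α₂`, then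
`(α₂/α₁)·‖x − z₁‖ ≥ ‖x − z₂‖ ≥ ‖x − z₁‖`. -/
theorem stmt_5 (n : ℕ) (s : Set (EuclideanSpace ℝ (Fin n))) (hs : s.Nonempty)
    (hsconv : Convex ℝ s)
    (g : EuclideanSpace ℝ (Fin n) → ℝ) (hg : ConvexOn ℝ s g)
    (x v : EuclideanSpace ℝ (Fin n))
    (α₁ α₂ : ℝ) (hα₁ : 0 < α₁) (hα₁₂ : α₁ ≤ α₂)
    (z₁ z₂ : EuclideanSpace ℝ (Fin n)) (hz₁ : z₁ ∈ s) (hz₂ : z₂ ∈ s)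
    (hvi₁ : ∀ y ∈ s, g z₁ + (1 / α₁) * ⟪x - α₁ • v - z₁, y - z₁⟫ ≤ g y)
    (hvi₂ : ∀ y ∈ s, g z₂ + (1 / α₂) * ⟪x - α₂ • v - z₂, y - z₂⟫ ≤ g y) :
    (α₂ / α₁) * ‖x - z₁‖ ≥ ‖x - z₂‖ ∧ ‖x - z₂‖ ≥ ‖x - z₁‖ :=
  stmt_5_general n s g x v α₁ α₂ hα₁ hα₁₂ z₁ z₂ hz₁ hz₂ hvi₁ hvi₂
end

section
/- Let s ⊆ ℝⁿ be a nonempty convex set, let f : ℝⁿ → ℝ be convex and differentiable at x ∈ s with gradient v = ∇f(x), let g : ℝⁿ → ℝ be convex on s, and let ᾱ > 0. Suppose z ∈ s satisfies: (a) the variational inequality g(z) + (1/ᾱ)·⟨x − ᾱ·v − z, y − z⟩ ≤ g(y) for all y ∈ s (i.e. z = prox_{ᾱg}(x − ᾱ∇f(x))), and (b) the line-search descent condition f(z) ≤ f(x) + ⟨v, z − x⟩ + ‖x − z‖²/(2ᾱ). Then, writing F := f + g: (i) for every u ∈ s, ‖x − u‖² − ‖z − u‖² ≥ 2ᾱ·[F(z)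 − F(u)]; (ii) F(z) − F(x) ≤ −‖z − x‖²/(2ᾱ) ≤ 0. -/
open scoped RealInnerProductSpace

/-!
Convexity of `f` gives `f x + ⟪∇f x, u - x⟫ ≤ f u`; combined with the descent condition this bounds
`f z - f u` by `‖x - z‖² / (2α) - ⟪∇f x, u - z⟫`, while the prox inequality at `u` bounds `g z - g u`
by `⟪∇f x, u - z⟫ - ⟪x - z, u - z⟫ / α`. The gradient terms cancel in the sum, and
`‖x - z‖² - 2⟪x - z, u - z⟫ = ‖x - u‖² - ‖z - u‖²` gives (i). Taking `u = x` gives (ii).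
-/

open Set AffineMap in
theorem ConvexOn.add_fderiv_sub_le {E : Type*} [NormedAddCommGroup E] [NormedSpace ℝ E]
    {s : Set E} {f : E → ℝ} {f' : E →L[ℝ] ℝ} {x u : E} (hf : ConvexOn ℝ s f)
    (hx : x ∈ s) (hu : u ∈ s) (hf' : HasFDerivAt f f' x) :
    f x + f' (u - x) ≤ f u := by
  have hφ : ConvexOn ℝ (Icc (0 : ℝ) 1) (f ∘ lineMap x u) :=
    (hf.comp_affineMap (lineMap x u)).subset (fun _ ht ↦ hf.1.lineMap_mem hx hu ht)
      (convex_Icc 0 1)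
  have hφ' : HasDerivAt (f ∘ lineMap x u) (f' (u - x)) (0 : ℝ) := by
    rw [← lineMap_apply_zero x u (k := ℝ)] at hf'
    exact hf'.comp_hasDerivAt 0 hasDerivAt_lineMap
  have hslope := hφ.le_slope_of_hasDerivAt (by simp) (by simp) zero_lt_one hφ'
  simp only [slope, Function.comp_apply, lineMap_apply_zero, lineMap_apply_one, vsub_eq_sub,
    sub_zero, inv_one, one_smul] at hslope
  linarith

theorem ConvexOn.add_inner_sub_le_of_hasGradientAt {E : Type*} [NormedAddCommGroup E]
    [InnerProductSpace ℝ E] [CompleteSpace E] {s : Set E} {f : E → ℝ} {v x u : E}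
    (hf : ConvexOn ℝ s f) (hx : x ∈ s) (hu : u ∈ s) (hv : HasGradientAt f v x) :
    f x + ⟪v, u - x⟫ ≤ f u :=
  hf.add_fderiv_sub_le hx hu hv.hasFDerivAt

theorem forward_backward_fejer {E : Type*} [NormedAddCommGroup E] [InnerProductSpace ℝ E]
    {f g : E → ℝ} {x z u v : E} {α : ℝ} (hα : 0 < α)
    (hfu : f x + ⟪v, u - x⟫ ≤ f u)
    (hgu : g z + (1 / α) * ⟪x - α • v - z, u - z⟫ ≤ g u)
    (hls : f z ≤ f x + ⟪v, z - x⟫ + ‖x - z‖ ^ 2 / (2 * α)) :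
    2 * α * ((f z + g z) - (f u + g u)) ≤ ‖x - u‖ ^ 2 - ‖z - u‖ ^ 2 := by
  have hnorm : ‖x - u‖ ^ 2 = ‖x - z‖ ^ 2 - 2 * ⟪x - z, u - z⟫ + ‖z - u‖ ^ 2 := by
    rw [show x - u = (x - z) - (u - z) by abel, norm_sub_sq_real, ← norm_neg (u - z), neg_sub]
  have hprox : ⟪x - α • v - z, u - z⟫ = ⟪x - z, u - z⟫ - α * ⟪v, u - z⟫ := by
    rw [sub_right_comm, inner_sub_left, real_inner_smul_left]
  have hlin : ⟪v, u - x⟫ = ⟪v, u - z⟫ + ⟪v, z - x⟫ := by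
    rw [← inner_add_right, sub_add_sub_cancel]
  have hf_step : f z - f u ≤ ‖x - z‖ ^ 2 / (2 * α) - ⟪v, u - z⟫ := by linarith
  have hg_step : g z - g u ≤ ⟪v, u - z⟫ - ⟪x - z, u - z⟫ / α := by
    have : 1 / α * (⟪x - z, u - z⟫ - α * ⟪v, u - z⟫) = ⟪x - z, u - z⟫ / α - ⟪v, u - z⟫ := by
      field_simp
    rw [hprox, this] at hgu
    linarith
  calc 2 * α * ((f z + g z) - (f u + g u)) = 2 * α * ((f z - f u) + (g z - g u)) := by ring
    _ ≤ 2 * α * (‖x - z‖ ^ 2 / (2 * α) - ⟪x - z, u - z⟫ / α) := by gcongr; linarith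
    _ = ‖x - u‖ ^ 2 - ‖z - u‖ ^ 2 := by rw [hnorm]; field_simp; ring

theorem stmt_6_general (n : ℕ) (s : Set (EuclideanSpace ℝ (Fin n)))
    (f g : EuclideanSpace ℝ (Fin n) → ℝ)
    (hf : ConvexOn ℝ Set.univ f)
    (x : EuclideanSpace ℝ (Fin n)) (hx : x ∈ s)
    (v : EuclideanSpace ℝ (Fin n)) (hv : HasGradientAt f v x)
    (α : ℝ) (hα : 0 < α)
    (z : EuclideanSpace ℝ (Fin n))
    (hvi : ∀ y ∈ s, g z + (1 / α) * ⟪x - α • v - z, y - z⟫ ≤ g y)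
    (hls : f z ≤ f x + ⟪v, z - x⟫ + ‖x - z‖ ^ 2 / (2 * α)) :
    (∀ u ∈ s, ‖x - u‖ ^ 2 - ‖z - u‖ ^ 2 ≥ 2 * α * ((f z + g z) - (f u + g u))) ∧
      (f z + g z) - (f x + g x) ≤ -‖z - x‖ ^ 2 / (2 * α) ∧
      -‖z - x‖ ^ 2 / (2 * α) ≤ 0 := by
  have fejer : ∀ u ∈ s, ‖x - u‖ ^ 2 - ‖z - u‖ ^ 2 ≥ 2 * α * ((f z + g z) - (f u + g u)) :=
    fun u hu ↦ forward_backward_fejer hα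
      (hf.add_inner_sub_le_of_hasGradientAt trivial trivial hv) (hvi u hu) hls
  refine ⟨fejer, ?_, div_nonpos_of_nonpos_of_nonneg (neg_nonpos.2 (sq_nonneg _)) (by positivity)⟩
  have hdecrease := fejer x hx
  rw [sub_self, norm_zero] at hdecrease
  rw [le_div_iff₀ (by positivity)]
  linarith

/-- Key inequalities for one forward-backward step with the Beck–Teboulle
line-search descent condition: the Fejér-type inequality (i) and the sufficient
decrease inequality (ii). -/
theorem stmt_6 (n : ℕ) (s : Set (EuclideanSpace ℝ (Fin n))) (hs : s.Nonempty)
    (hsconv : Convex ℝ s)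
    (f g : EuclideanSpace ℝ (Fin n) → ℝ)
    (hf : ConvexOn ℝ Set.univ f)
    (x : EuclideanSpace ℝ (Fin n)) (hx : x ∈ s)
    (v : EuclideanSpace ℝ (Fin n)) (hv : HasGradientAt f v x)
    (hg : ConvexOn ℝ s g)
    (α : ℝ) (hα : 0 < α)
    (z : EuclideanSpace ℝ (Fin n)) (hz : z ∈ s)
    (hvi : ∀ y ∈ s, g z + (1 / α) * ⟪x - α • v - z, y - z⟫ ≤ g y)
    (hls : f z ≤ f x + ⟪v, z - x⟫ + ‖x - z‖ ^ 2 / (2 * α)) :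
    (∀ u ∈ s, ‖x - u‖ ^ 2 - ‖z - u‖ ^ 2 ≥ 2 * α * ((f z + g z) - (f u + g u))) ∧
      (f z + g z) - (f x + g x) ≤ -‖z - x‖ ^ 2 / (2 * α) ∧
      -‖z - x‖ ^ 2 / (2 * α) ≤ 0 :=
  stmt_6_general n s f g hf x hx v hv α hα z hvi hls
end

section
/- Let s ⊆ ℝⁿ be a nonempty closed convex set, let F : ℝⁿ → ℝ be convex on s and lower semicontinuous on s, and suppose the solution set S* := {u ∈ s : F(u) ≤ F(y) for all y ∈ s} is nonempty. Let (xᵏ)ₖ∈ℕ ⊆ s and (αₖ)ₖ∈ℕ ⊆ ℝ be sequences with αₖ ≥ ᾱ for some ᾱ > 0 and all k, satisfying for every k ∈ ℕ and every u ∈ s the inequality ‖xᵏ − u‖² − ‖xᵏ⁺¹ − u‖² ≥ 2αₖ·[F(xᵏ⁺¹) − F(u)]. Then (xᵏ) converges to a point of S*, and F(xᵏ) → min_{x∈s} F(x). -/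
open Filter Topology

/-!
For a minimizer `q` the term `2αₖ (F xₖ₊₁ - F q)` of the Fejér inequality at `u = q` is
nonnegative, so the distance to every minimizer is nonincreasing. Telescoping the same
inequality bounds `∑ₖ 2ᾱ (F xₖ₊₁ - min F)` by `dist (x₀, q)²`, hence `F xₖ → min F`.
The iterates stay in a ball, so a subsequence converges to some `p ∈ s`, which is a
minimizer by lower semicontinuity; since the distance to `p` is nonincreasing and tends
to `0` along the subsequence, the whole sequence converges to `p`.
-/

theorem tendsto_of_antitone_dist_of_subseq {X : Type*} [PseudoMetricSpace X]
    {x : ℕ → X} {p : X} (hanti : Antitone fun k => dist (x k) p) {φ : ℕ → ℕ}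
    (hφ : StrictMono φ) (hsub : Tendsto (x ∘ φ) atTop (𝓝 p)) : Tendsto x atTop (𝓝 p) := by
  rw [tendsto_iff_dist_tendsto_zero] at hsub ⊢
  exact (tendsto_iff_tendsto_subseq_of_antitone hanti hφ.tendsto_atTop).2 hsub

theorem LowerSemicontinuousWithinAt.le_of_tendsto {X ι γ : Type*} [TopologicalSpace X]
    [LinearOrder γ] [TopologicalSpace γ] [OrderTopology γ] [DenselyOrdered γ]
    {s : Set X} {F : X → γ} {p : X} (hF : LowerSemicontinuousWithinAt F s p)
    {l : Filter ι} [l.NeBot] {z : ι → X} (hz : Tendsto z l (𝓝[s] p)) {c : γ}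
    (hc : Tendsto (F ∘ z) l (𝓝 c)) : F p ≤ c :=
  le_of_forall_lt_imp_le_of_dense fun y hy =>
    ge_of_tendsto hc ((hz.eventually (hF y hy)).mono fun _ h => h.le)

theorem summable_of_le_sub_succ {a e : ℕ → ℝ} (he : ∀ k, 0 ≤ e k) (ha : ∀ k, 0 ≤ a k)
    (h : ∀ k, e k ≤ a k - a (k + 1)) : Summable e :=
  summable_of_sum_range_le he (c := a 0) fun N => calc
    ∑ i ∈ Finset.range N, e i ≤ ∑ i ∈ Finset.range N, (a i - a (i + 1)) :=
      Finset.sum_le_sum fun i _ => h i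
    _ = a 0 - a N := Finset.sum_range_sub' a N
    _ ≤ a 0 := sub_le_self _ (ha N)

section Fejer

variable {X : Type*} [PseudoMetricSpace X] {s : Set X} {F : X → ℝ} {x : ℕ → X}
  {α : ℕ → ℝ} {u : X}

theorem antitone_dist_of_fejer
    (hfejer : ∀ k, 2 * α k * (F (x (k + 1)) - F u) ≤ dist (x k) u ^ 2 - dist (x (k + 1)) u ^ 2)
    (hα : ∀ k, 0 ≤ α k) (hu : ∀ k, F u ≤ F (x (k + 1))) : Antitone fun k => dist (x k) u := by
  refine antitone_nat_of_succ_le fun k => ?_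
  have hsq : dist (x (k + 1)) u ^ 2 ≤ dist (x k) u ^ 2 := by
    have := mul_nonneg (mul_nonneg zero_le_two (hα k)) (sub_nonneg.2 (hu k))
    linarith [hfejer k]
  exact (pow_le_pow_iff_left₀ dist_nonneg dist_nonneg two_ne_zero).1 hsq

theorem tendsto_apply_of_fejer {αbar : ℝ}
    (hfejer : ∀ k, 2 * α k * (F (x (k + 1)) - F u) ≤ dist (x k) u ^ 2 - dist (x (k + 1)) u ^ 2)
    (hαbar : 0 < αbar) (hα : ∀ k, αbar ≤ α k) (hu : ∀ k, F u ≤ F (x (k + 1))) :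
    Tendsto (fun k => F (x k)) atTop (𝓝 (F u)) := by
  have hgap : ∀ k, 0 ≤ F (x (k + 1)) - F u := fun k => sub_nonneg.2 (hu k)
  have hsum : Summable fun k => 2 * αbar * (F (x (k + 1)) - F u) := by
    refine summable_of_le_sub_succ (a := fun k => dist (x k) u ^ 2)
      (fun k => mul_nonneg (by positivity) (hgap k)) (fun k => by positivity) fun k => ?_
    calc 2 * αbar * (F (x (k + 1)) - F u) ≤ 2 * α k * (F (x (k + 1)) - F u) := by
          gcongr
          · exact hgap k
          · exact hα k
      _ ≤ _ := hfejer k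
  rw [summable_mul_left_iff (by positivity)] at hsum
  exact (tendsto_add_atTop_iff_nat 1).1 (tendsto_sub_nhds_zero_iff.1 hsum.tendsto_atTop_zero)

theorem exists_isMinOn_tendsto_of_fejer [ProperSpace X] {αbar : ℝ} (hscl : IsClosed s)
    (hlsc : LowerSemicontinuousOn F s) (hmin : ∃ u ∈ s, IsMinOn F s u) (hxs : ∀ k, x k ∈ s)
    (hαbar : 0 < αbar) (hα : ∀ k, αbar ≤ α k)
    (hfejer : ∀ k, ∀ u ∈ s,
      2 * α k * (F (x (k + 1)) - F u) ≤ dist (x k) u ^ 2 - dist (x (k + 1)) u ^ 2) :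
    ∃ p ∈ s, IsMinOn F s p ∧ Tendsto x atTop (𝓝 p) ∧
      Tendsto (fun k => F (x k)) atTop (𝓝 (F p)) := by
  have hα₀ : ∀ k, 0 ≤ α k := fun k => hαbar.le.trans (hα k)
  have hle : ∀ v, IsMinOn F s v → ∀ k, F v ≤ F (x (k + 1)) := fun v hv k =>
    isMinOn_iff.1 hv _ (hxs _)
  obtain ⟨u, hus, hu⟩ := hmin
  have hFu := tendsto_apply_of_fejer (fun k => hfejer k u hus) hαbar hα (hle u hu)
  have hanti := antitone_dist_of_fejer (fun k => hfejer k u hus) hα₀ (hle u hu)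
  obtain ⟨p, -, φ, hφ, hxφ⟩ := tendsto_subseq_of_bounded Metric.isBounded_closedBall
    fun k => Metric.mem_closedBall.2 (hanti (Nat.zero_le k))
  have hxs_φ : ∀ᶠ j in atTop, (x ∘ φ) j ∈ s := Eventually.of_forall fun j => hxs (φ j)
  have hps : p ∈ s := hscl.mem_of_tendsto hxφ hxs_φ
  have hpu : F p ≤ F u := LowerSemicontinuousWithinAt.le_of_tendsto (hlsc p hps)
    (tendsto_nhdsWithin_iff.2 ⟨hxφ, hxs_φ⟩) (hFu.comp hφ.tendsto_atTop)
  have hp : IsMinOn F s p := isMinOn_iff.2 fun y hy => hpu.trans (isMinOn_iff.1 hu y hy)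
  refine ⟨p, hps, hp, ?_, le_antisymm hpu (isMinOn_iff.1 hu p hps) ▸ hFu⟩
  exact tendsto_of_antitone_dist_of_subseq
    (antitone_dist_of_fejer (fun k => hfejer k p hps) hα₀ (hle p hp)) hφ hxφ

end Fejer

theorem stmt_7_general (n : ℕ) (s : Set (EuclideanSpace ℝ (Fin n)))
    (hscl : IsClosed s)
    (F : EuclideanSpace ℝ (Fin n) → ℝ)
    (hlsc : LowerSemicontinuousOn F s)
    (Sstar : Set (EuclideanSpace ℝ (Fin n)))
    (hSstar : Sstar = {u ∈ s | ∀ y ∈ s, F u ≤ F y})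
    (hSne : Sstar.Nonempty)
    (x : ℕ → EuclideanSpace ℝ (Fin n)) (hxs : ∀ k, x k ∈ s)
    (α : ℕ → ℝ) (αbar : ℝ) (hαbar : 0 < αbar) (hα : ∀ k, αbar ≤ α k)
    (hfejer : ∀ k : ℕ, ∀ u ∈ s,
      ‖x k - u‖ ^ 2 - ‖x (k + 1) - u‖ ^ 2 ≥ 2 * α k * (F (x (k + 1)) - F u)) :
    ∃ p ∈ Sstar, Tendsto x atTop (𝓝 p) ∧
      Tendsto (fun k => F (x k)) atTop (𝓝 (F p)) := by
  subst hSstar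
  obtain ⟨u, hus, hu⟩ := hSne
  obtain ⟨p, hps, hp, hxp, hFp⟩ := exists_isMinOn_tendsto_of_fejer hscl hlsc
    ⟨u, hus, isMinOn_iff.2 hu⟩ hxs hαbar hα fun k v hv => by
      simpa only [dist_eq_norm] using hfejer k v hv
  exact ⟨p, ⟨hps, isMinOn_iff.1 hp⟩, hxp, hFp⟩

/-- Global convergence of the forward-backward splitting method: under the
Fejér-type inequality with step sizes bounded below, the iterates converge to an
optimal solution and the function values converge to the minimum value. -/
theorem stmt_7 (n : ℕ) (s : Set (EuclideanSpace ℝ (Fin n))) (hs : s.Nonempty)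
    (hscl : IsClosed s) (hsconv : Convex ℝ s)
    (F : EuclideanSpace ℝ (Fin n) → ℝ) (hF : ConvexOn ℝ s F)
    (hlsc : LowerSemicontinuousOn F s)
    (Sstar : Set (EuclideanSpace ℝ (Fin n)))
    (hSstar : Sstar = {u ∈ s | ∀ y ∈ s, F u ≤ F y})
    (hSne : Sstar.Nonempty)
    (x : ℕ → EuclideanSpace ℝ (Fin n)) (hxs : ∀ k, x k ∈ s)
    (α : ℕ → ℝ) (αbar : ℝ) (hαbar : 0 < αbar) (hα : ∀ k, αbar ≤ α k)
    (hfejer : ∀ k : ℕ, ∀ u ∈ s,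
      ‖x k - u‖ ^ 2 - ‖x (k + 1) - u‖ ^ 2 ≥ 2 * α k * (F (x (k + 1)) - F u)) :
    ∃ p ∈ Sstar, Tendsto x atTop (𝓝 p) ∧
      Tendsto (fun k => F (x k)) atTop (𝓝 (F p)) :=
  stmt_7_general n s hscl F hlsc Sstar hSstar hSne x hxs α αbar hαbar hα hfejer
end

section
/- Let s ⊆ ℝⁿ be a nonempty convex set, let F : ℝⁿ → ℝ be convex on s, and suppose the solution set S* := {u ∈ s : F(u) ≤ F(y) for all y ∈ s} is nonempty with minimum value F*. Let (xᵏ)ₖ∈ℕ ⊆ s and (αₖ)ₖ∈ℕ ⊆ ℝ be sequences with αₖ ≥ ᾱ for some ᾱ > 0 and all k, satisfying: (a) for every k and every u ∈ s, ‖xᵏ − u‖² − ‖xᵏ⁺¹ − u‖² ≥ 2αₖ·[F(xᵏ⁺¹) − F(u)], and (b) F(xᵏ⁺¹) ≤ F(xᵏ) for all k. Then lim_{k→∞} k·[F(xᵏ) − F*] = 0, i.e. the functional values converge with complexity o(k⁻¹). -/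
/-!
At a minimizer `x*` the Fejér inequality telescopes, so `∑ₖ (F(xᵏ⁺¹) − F*) ≤ ‖x⁰ − x*‖² / (2ᾱ)`.
A summable nonincreasing sequence of reals is `o(1/k)` (Olivier's theorem).
-/

open Filter Topology Finset

/-- Olivier's theorem: `m · aₘ` is at most twice the block `a_{m/2} + ⋯ + a_{m-1}`, which lies in a
vanishing tail of the series. -/
theorem Antitone.tendsto_nat_mul_of_summable {a : ℕ → ℝ} (ha : Antitone a) (hs : Summable a) :
    Tendsto (fun n : ℕ => (n : ℝ) * a n) atTop (𝓝 0) := by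
  have h0 : ∀ k, 0 ≤ a k := fun k => ha.le_of_tendsto hs.tendsto_atTop_zero k
  have htail : Tendsto (fun m => 2 * ∑' k, a (k + m / 2)) atTop (𝓝 0) := by
    simpa using ((tendsto_sum_nat_add a).comp (Nat.tendsto_div_const_atTop two_ne_zero)).const_mul 2
  refine squeeze_zero (fun m => mul_nonneg m.cast_nonneg (h0 m)) (fun m => ?_) htail
  have hhalf : (m : ℝ) ≤ 2 * ((m - m / 2 : ℕ) : ℝ) := by exact_mod_cast (by omega : m ≤ 2 * (m - m / 2))
  calc (m : ℝ) * a m ≤ 2 * ((m - m / 2 : ℕ) : ℝ) * a m := by gcongr; exact h0 m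
    _ = 2 * ∑ k ∈ Ico (m / 2) m, a m := by simp only [sum_const, Nat.card_Ico, nsmul_eq_mul]; ring
    _ ≤ 2 * ∑ k ∈ Ico (m / 2) m, a k := by
      gcongr with k hk
      exact ha (mem_Ico.1 hk).2.le
    _ = 2 * ∑ k ∈ range (m - m / 2), a (k + m / 2) := by
      simp only [sum_Ico_eq_sum_range, add_comm]
    _ ≤ 2 * ∑' k, a (k + m / 2) := by
      gcongr
      exact ((summable_nat_add_iff _).mpr hs).sum_le_tsum _ fun k _ => h0 _

theorem summable_of_le_sub_succ_s8 {b d : ℕ → ℝ} (hb : ∀ k, 0 ≤ b k) (hd : ∀ k, 0 ≤ d k)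
    (h : ∀ k, b k ≤ d k - d (k + 1)) : Summable b :=
  summable_of_sum_range_le hb fun m => calc
    ∑ k ∈ range m, b k ≤ ∑ k ∈ range m, (d k - d (k + 1)) := sum_le_sum fun k _ => h k
    _ = d 0 - d m := sum_range_sub' d m
    _ ≤ d 0 := sub_le_self _ (hd m)

theorem stmt_8_general (n : ℕ) (s : Set (EuclideanSpace ℝ (Fin n)))
    (F : EuclideanSpace ℝ (Fin n) → ℝ)
    (Sstar : Set (EuclideanSpace ℝ (Fin n)))
    (hSstar : Sstar = {u ∈ s | ∀ y ∈ s, F u ≤ F y})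
    (xstar : EuclideanSpace ℝ (Fin n)) (hxstar : xstar ∈ Sstar)
    (Fstar : ℝ) (hFstar : Fstar = F xstar)
    (x : ℕ → EuclideanSpace ℝ (Fin n)) (hxs : ∀ k, x k ∈ s)
    (α : ℕ → ℝ) (αbar : ℝ) (hαbar : 0 < αbar) (hα : ∀ k, αbar ≤ α k)
    (hfejer : ∀ k : ℕ, ∀ u ∈ s,
      ‖x k - u‖ ^ 2 - ‖x (k + 1) - u‖ ^ 2 ≥ 2 * α k * (F (x (k + 1)) - F u))
    (hdec : ∀ k : ℕ, F (x (k + 1)) ≤ F (x k)) :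
    Tendsto (fun k : ℕ => (k : ℝ) * (F (x k) - Fstar)) atTop (𝓝 0) := by
  subst hSstar hFstar
  obtain ⟨hxstar_mem, hmin⟩ := hxstar
  have hgap : ∀ k, 0 ≤ F (x k) - F xstar := fun k => sub_nonneg.2 (hmin _ (hxs k))
  have hstep : ∀ k, 2 * αbar * (F (x (k + 1)) - F xstar) ≤
      ‖x k - xstar‖ ^ 2 - ‖x (k + 1) - xstar‖ ^ 2 := fun k =>
    (mul_le_mul_of_nonneg_right (by linarith [hα k]) (hgap _)).trans (hfejer k xstar hxstar_mem)
  have hsum : Summable fun k => F (x k) - F xstar := by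
    refine (summable_nat_add_iff 1).mp ((summable_mul_left_iff (a := 2 * αbar) (by positivity)).mp ?_)
    exact summable_of_le_sub_succ_s8 (fun k => mul_nonneg (by positivity) (hgap _))
      (fun k => sq_nonneg _) hstep
  exact (antitone_nat_of_succ_le fun k => sub_le_sub_right (hdec k) _).tendsto_nat_mul_of_summable
    hsum

/-- Sublinear `o(k⁻¹)` convergence of the function values of the
forward-backward splitting method: under the Fejér-type inequality, monotone
decrease, and step sizes bounded below, `k·(F(xᵏ) − F*) → 0`. -/
theorem stmt_8 (n : ℕ) (s : Set (EuclideanSpace ℝ (Fin n))) (hs : s.Nonempty)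
    (hsconv : Convex ℝ s)
    (F : EuclideanSpace ℝ (Fin n) → ℝ) (hF : ConvexOn ℝ s F)
    (Sstar : Set (EuclideanSpace ℝ (Fin n)))
    (hSstar : Sstar = {u ∈ s | ∀ y ∈ s, F u ≤ F y})
    (xstar : EuclideanSpace ℝ (Fin n)) (hxstar : xstar ∈ Sstar)
    (Fstar : ℝ) (hFstar : Fstar = F xstar)
    (x : ℕ → EuclideanSpace ℝ (Fin n)) (hxs : ∀ k, x k ∈ s)
    (α : ℕ → ℝ) (αbar : ℝ) (hαbar : 0 < αbar) (hα : ∀ k, αbar ≤ α k)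
    (hfejer : ∀ k : ℕ, ∀ u ∈ s,
      ‖x k - u‖ ^ 2 - ‖x (k + 1) - u‖ ^ 2 ≥ 2 * α k * (F (x (k + 1)) - F u))
    (hdec : ∀ k : ℕ, F (x (k + 1)) ≤ F (x k)) :
    Tendsto (fun k : ℕ => (k : ℝ) * (F (x k) - Fstar)) atTop (𝓝 0) :=
  stmt_8_general n s F Sstar hSstar xstar hxstar Fstar hFstar x hxs α αbar hαbar hα hfejer hdec
end

section
/- Let s ⊆ ℝⁿ be a nonempty convex set, let F : ℝⁿ → ℝ be convex on s, let S* := {u ∈ s : F(u) ≤ F(y) for all y ∈ s} be nonempty, let x* ∈ S* and F* := F(x*). Assume the quadratic growth condition: there exist κ, ε > 0 such that F(x) − F* ≥ (κ/2)·d(x; S*)² for all x ∈ s with ‖x − x*‖ ≤ ε. Let (xᵏ) ⊆ s and (αₖ) ⊆ ℝ satisfy the Fejér inequality ‖xᵏ − u‖² − ‖xᵏ⁺¹ − u‖² ≥ 2αₖ·[F(xᵏ⁺¹) − F(u)] for all k and all u ∈ s, and suppose there are α > 0 and K ∈ ℕ such that αₖ ≥ 2α and ‖xᵏ − x*‖ ≤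 ε for all k > K. Then for all k > K: d(xᵏ⁺¹; S*) ≤ (1/√(1 + ακ))·d(xᵏ; S*). -/
/-!
Fix a minimizer `u`. The Fejér inequality at `u`, combined with quadratic growth at `xᵏ⁺¹`
and `d(xᵏ⁺¹; S*) ≤ ‖xᵏ⁺¹ − u‖`, gives `(1 + aκ) · d(xᵏ⁺¹; S*)² ≤ ‖xᵏ − u‖²`; taking the
infimum over `u ∈ S*` yields the contraction.
-/

open Metric

section Contraction

variable {X : Type*} [PseudoMetricSpace X]

theorem infDist_le_one_div_sqrt_mul_infDist {S : Set X} (hS : S.Nonempty) {c : ℝ} (hc : 0 < c)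
    {x y : X} (h : ∀ u ∈ S, c * infDist y S ^ 2 ≤ dist x u ^ 2) :
    infDist y S ≤ 1 / √c * infDist x S := by
  have hsqrt : 0 < √c := Real.sqrt_pos.mpr hc
  rw [one_div, inv_mul_eq_div, le_div_iff₀ hsqrt, mul_comm, le_infDist hS]
  intro u hu
  calc √c * infDist y S = √(c * infDist y S ^ 2) := by
        rw [Real.sqrt_mul hc.le, Real.sqrt_sq infDist_nonneg]
    _ ≤ √(dist x u ^ 2) := Real.sqrt_le_sqrt (h u hu)
    _ = dist x u := Real.sqrt_sq dist_nonneg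

theorem one_add_mul_sq_infDist_le {S : Set X} {F : X → ℝ} {x x' u : X} {α a κ : ℝ}
    (hu : u ∈ S) (hmin : F u ≤ F x') (hgrow : κ / 2 * infDist x' S ^ 2 ≤ F x' - F u)
    (hfejer : 2 * α * (F x' - F u) ≤ dist x u ^ 2 - dist x' u ^ 2)
    (ha : 0 < a) (hα : 2 * a ≤ α) :
    (1 + a * κ) * infDist x' S ^ 2 ≤ dist x u ^ 2 := by
  have hdist : infDist x' S ^ 2 ≤ dist x' u ^ 2 :=
    pow_le_pow_left₀ infDist_nonneg (infDist_le_dist_of_mem hu) 2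
  nlinarith [mul_nonneg (sub_nonneg.mpr hα) (sub_nonneg.mpr hmin),
    mul_le_mul_of_nonneg_left hgrow ha.le, sq_nonneg (infDist x' S)]

end Contraction

theorem stmt_9_general (n : ℕ) (s : Set (EuclideanSpace ℝ (Fin n)))
    (F : EuclideanSpace ℝ (Fin n) → ℝ)
    (Sstar : Set (EuclideanSpace ℝ (Fin n)))
    (hSstar : Sstar = {u ∈ s | ∀ y ∈ s, F u ≤ F y})
    (xstar : EuclideanSpace ℝ (Fin n)) (hxstar : xstar ∈ Sstar)
    (Fstar : ℝ) (hFstar : Fstar = F xstar)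
    (κ ε : ℝ) (hκ : 0 < κ)
    (hgrow : ∀ x ∈ s, ‖x - xstar‖ ≤ ε →
      F x - Fstar ≥ (κ / 2) * (Metric.infDist x Sstar) ^ 2)
    (x : ℕ → EuclideanSpace ℝ (Fin n)) (hxs : ∀ k, x k ∈ s)
    (α : ℕ → ℝ)
    (hfejer : ∀ k : ℕ, ∀ u ∈ s,
      ‖x k - u‖ ^ 2 - ‖x (k + 1) - u‖ ^ 2 ≥ 2 * α k * (F (x (k + 1)) - F u))
    (a : ℝ) (ha : 0 < a) (K : ℕ)
    (hαK : ∀ k > K, 2 * a ≤ α k) (hball : ∀ k > K, ‖x k - xstar‖ ≤ ε) :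
    ∀ k > K, Metric.infDist (x (k + 1)) Sstar ≤
      (1 / Real.sqrt (1 + a * κ)) * Metric.infDist (x k) Sstar := by
  intro k hk
  refine infDist_le_one_div_sqrt_mul_infDist ⟨xstar, hxstar⟩ (by positivity) fun u hu ↦ ?_
  subst hSstar hFstar
  have hFu : F u = F xstar := le_antisymm (hu.2 xstar hxstar.1) (hxstar.2 u hu.1)
  have hxs' := hxs (k + 1)
  refine one_add_mul_sq_infDist_le (F := F) hu (hu.2 _ hxs') ?_ ?_ ha (hαK k hk)
  · exact hFu ▸ hgrow _ hxs' (hball (k + 1) (by omega))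
  · simpa only [dist_eq_norm] using hfejer k u hu.1

/-- Linear decay of the distances to the solution set for forward-backward
splitting iterates under the quadratic growth condition. -/
theorem stmt_9 (n : ℕ) (s : Set (EuclideanSpace ℝ (Fin n))) (hs : s.Nonempty)
    (hsconv : Convex ℝ s)
    (F : EuclideanSpace ℝ (Fin n) → ℝ) (hF : ConvexOn ℝ s F)
    (Sstar : Set (EuclideanSpace ℝ (Fin n)))
    (hSstar : Sstar = {u ∈ s | ∀ y ∈ s, F u ≤ F y}) (hSne : Sstar.Nonempty)
    (xstar : EuclideanSpace ℝ (Fin n)) (hxstar : xstar ∈ Sstar)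
    (Fstar : ℝ) (hFstar : Fstar = F xstar)
    (κ ε : ℝ) (hκ : 0 < κ) (hε : 0 < ε)
    (hgrow : ∀ x ∈ s, ‖x - xstar‖ ≤ ε →
      F x - Fstar ≥ (κ / 2) * (Metric.infDist x Sstar) ^ 2)
    (x : ℕ → EuclideanSpace ℝ (Fin n)) (hxs : ∀ k, x k ∈ s)
    (α : ℕ → ℝ)
    (hfejer : ∀ k : ℕ, ∀ u ∈ s,
      ‖x k - u‖ ^ 2 - ‖x (k + 1) - u‖ ^ 2 ≥ 2 * α k * (F (x (k + 1)) - F u))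
    (a : ℝ) (ha : 0 < a) (K : ℕ)
    (hαK : ∀ k > K, 2 * a ≤ α k) (hball : ∀ k > K, ‖x k - xstar‖ ≤ ε) :
    ∀ k > K, Metric.infDist (x (k + 1)) Sstar ≤
      (1 / Real.sqrt (1 + a * κ)) * Metric.infDist (x k) Sstar :=
  stmt_9_general n s F Sstar hSstar xstar hxstar Fstar hFstar κ ε hκ hgrow x hxs α hfejer a ha K hαK
    hball
end

section
/- Let s ⊆ ℝⁿ be a nonempty convex set, let F : ℝⁿ → ℝ be convex on s, let S* := {u ∈ s : F(u) ≤ F(y) for all y ∈ s} be nonempty, let x* ∈ S* and F* := F(x*). Assume: (a) quadratic growth: there exist κ, ε > 0 with F(x) − F* ≥ (κ/2)·d(x; S*)² for all x ∈ s with ‖x − x*‖ ≤ ε; (b) Fejér inequality: ‖xᵏ − u‖² − ‖xᵏ⁺¹ − u‖² ≥ 2αₖ·[F(xᵏ⁺¹) − F(u)] for all k ∈ ℕ and u ∈ s; (c) sufficient decrease: F(xᵏ⁺¹) ≤ F(xᵏ) − ‖xᵏ⁺¹ − xᵏ‖²/(2αₖ) for all k; (d) there are α > 0 and K ∈ ℕ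 with αₖ ≥ 2α for all k > K; (e) xᵏ → x*. Then there exists K' ∈ ℕ such that for all k > K': ‖xᵏ⁺¹ − x*‖ ≤ (1/√(1 + ακ/4))·‖xᵏ − x*‖ and F(xᵏ⁺¹) − F* ≤ ((√(1 + ακ/4) + 1)/(2√(1 + ακ/4)))·(F(xᵏ) − F*); i.e. both the iterates and the function values converge Q-linearly. -/
/-!
Beyond the index `K` the Fejér inequality makes `(xᵏ)` Fejér monotone with respect to `S*`, so
its limit `x*` is at least as close to every `u ∈ S*` as `xᵏ` is, whence
`‖xᵏ - x*‖ ≤ 2 d(xᵏ; S*)`. With quadratic growth, the Fejér inequality at `u = x*` then yields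
the contraction of `‖xᵏ - x*‖`. For the values, the Fejér inequality at the points of `S*` bounds
`2αₖ (F(xᵏ⁺¹) - F*)` by `‖xᵏ⁺¹ - xᵏ‖² + 2 ‖xᵏ⁺¹ - xᵏ‖ d(xᵏ⁺¹; S*)`: sufficient decrease controls
the first term, AM-GM and quadratic growth the second.
-/

open Filter Topology

section Fejer

variable {E : Type*} [PseudoMetricSpace E]

lemma le_add_mul_infDist {S : Set E} (hS : S.Nonempty) {x : E} {b c A : ℝ} (hA : 0 ≤ A)
    (h : ∀ u ∈ S, c ≤ b + A * dist x u) : c ≤ b + A * Metric.infDist x S := by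
  rcases hA.eq_or_lt with rfl | hA
  · obtain ⟨u, hu⟩ := hS
    simpa using h u hu
  · have : (c - b) / A ≤ Metric.infDist x S :=
      (Metric.le_infDist hS).2 fun u hu => by rw [div_le_iff₀' hA]; linarith [h u hu]
    rw [div_le_iff₀' hA] at this
    linarith

lemma dist_le_of_tendsto_of_dist_succ_le {x : ℕ → E} {u x₀ : E} {K : ℕ}
    (hmono : ∀ m ≥ K, dist (x (m + 1)) u ≤ dist (x m) u) (hlim : Tendsto x atTop (𝓝 x₀))
    {k : ℕ} (hk : K ≤ k) : dist x₀ u ≤ dist (x k) u := by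
  have hanti : Antitone fun j => dist (x (j + k)) u :=
    antitone_nat_of_succ_le fun j => by
      simpa only [Nat.add_right_comm] using hmono (j + k) (by omega)
  have htail : Tendsto (fun j => dist (x (j + k)) u) atTop (𝓝 (dist x₀ u)) :=
    (hlim.comp (tendsto_add_atTop_nat k)).dist tendsto_const_nhds
  simpa using hanti.le_of_tendsto htail 0

lemma dist_le_two_mul_infDist_of_tendsto {x : ℕ → E} {S : Set E} {x₀ : E} {K : ℕ}
    (hS : S.Nonempty) (hmono : ∀ u ∈ S, ∀ m ≥ K, dist (x (m + 1)) u ≤ dist (x m) u)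
    (hlim : Tendsto x atTop (𝓝 x₀)) {k : ℕ} (hk : K ≤ k) :
    dist (x k) x₀ ≤ 2 * Metric.infDist (x k) S := by
  simpa using le_add_mul_infDist hS zero_le_two (b := 0) fun u hu => by
    linarith [dist_triangle_right (x k) x₀ u,
      dist_le_of_tendsto_of_dist_succ_le (hmono u hu) hlim hk]

lemma le_sq_dist_add_mul_infDist {S : Set E} (hS : S.Nonempty) {y z : E} {c : ℝ}
    (h : ∀ u ∈ S, c ≤ dist y u ^ 2 - dist z u ^ 2) :
    c ≤ dist z y ^ 2 + 2 * dist z y * Metric.infDist z S :=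
  le_add_mul_infDist hS (by positivity) fun u hu => by
    have := pow_le_pow_left₀ dist_nonneg (dist_triangle_left y u z) 2
    linarith [h u hu]

end Fejer

lemma iterate_contraction {a κ β δ d X X' : ℝ} (ha : 0 < a) (hκ : 0 < κ) (hβ : 4 * a ≤ β)
    (hfejer : β * δ ≤ X ^ 2 - X' ^ 2) (hgrow : κ / 2 * d ^ 2 ≤ δ)
    (hX : 0 ≤ X) (hX' : 0 ≤ X') (hX'd : X' ≤ 2 * d) :
    X' ≤ 1 / Real.sqrt (1 + a * κ / 4) * X := by
  have hδ : 0 ≤ δ := le_trans (by positivity) hgrow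
  have hsq : (1 + a * κ / 4) * X' ^ 2 ≤ X ^ 2 := by
    have : X' ^ 2 ≤ 4 * d ^ 2 := by nlinarith
    nlinarith [mul_le_mul_of_nonneg_right hβ hδ, mul_pos ha hκ]
  rw [one_div_mul_eq_div, le_div_iff₀ (by positivity), ← Real.sqrt_sq hX,
    ← Real.sqrt_sq hX', ← Real.sqrt_mul (by positivity)]
  exact Real.sqrt_le_sqrt (by linarith)

lemma value_contraction {a κ β δ δ' A d : ℝ} (ha : 0 < a) (hκ : 0 < κ) (hβ : 4 * a ≤ β)
    (hfejer : β * δ' ≤ A ^ 2 + 2 * A * d) (hdec : δ' ≤ δ - A ^ 2 / β)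
    (hgrow : κ / 2 * d ^ 2 ≤ δ') :
    δ' ≤ (Real.sqrt (1 + a * κ / 4) + 1) / (2 * Real.sqrt (1 + a * κ / 4)) * δ := by
  set r := Real.sqrt (1 + a * κ / 4)
  have hr2 : r ^ 2 = 1 + a * κ / 4 := Real.sq_sqrt (by positivity)
  have hr1 : 0 < r - 1 := by nlinarith [Real.sqrt_nonneg (1 + a * κ / 4), mul_pos ha hκ]
  have hβ0 : 0 < β := by linarith
  have hδ' : 0 ≤ δ' := le_trans (by positivity) hgrow
  have hA : A ^ 2 ≤ β * (δ - δ') := by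
    rw [← div_le_iff₀' hβ0]; linarith
  -- AM-GM with weight 2(r - 1), matched to `a * κ = 4 * (r ^ 2 - 1)` so that quadratic growth
  -- turns the distance term into a multiple of δ' (`hdist`)
  have hamgm : 2 * (r - 1) * (2 * A * d) ≤ A ^ 2 + 4 * (r - 1) ^ 2 * d ^ 2 := by
    nlinarith [sq_nonneg (A - 2 * (r - 1) * d)]
  have hdist : (r + 1) * (4 * (r - 1) ^ 2 * d ^ 2) ≤ 2 * a * (r - 1) * δ' := by
    have : (r + 1) * (4 * (r - 1) ^ 2 * d ^ 2) = (r - 1) * a * (κ * d ^ 2) := by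
      linear_combination (4 * (r - 1) * d ^ 2) * hr2
    rw [this]
    nlinarith [mul_le_mul_of_nonneg_left hgrow (mul_pos hr1 ha).le]
  have hkey : β * (4 * (r ^ 2 - 1) * δ') ≤
      β * (2 * (r + 1) * (2 * r - 1) * (δ - δ') + (r - 1) * δ') := by
    have h1 := mul_le_mul_of_nonneg_left hfejer (by nlinarith : 0 ≤ 2 * (r - 1) * (r + 1))
    have h2 := mul_le_mul_of_nonneg_left hA (by nlinarith : 0 ≤ (r + 1) * (2 * r - 1))
    have h3 := mul_le_mul_of_nonneg_left hβ (mul_nonneg hr1.le hδ')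
    nlinarith
  replace hkey := le_of_mul_le_mul_left hkey hβ0
  have hδ : 0 ≤ δ := by nlinarith [div_nonneg (sq_nonneg A) hβ0.le]
  rw [div_mul_eq_mul_div, le_div_iff₀ (by positivity)]
  nlinarith [mul_nonneg hr1.le hδ]

theorem stmt_11_general (n : ℕ) (s : Set (EuclideanSpace ℝ (Fin n)))
    (F : EuclideanSpace ℝ (Fin n) → ℝ)
    (Sstar : Set (EuclideanSpace ℝ (Fin n)))
    (hSstar : Sstar = {u ∈ s | ∀ y ∈ s, F u ≤ F y})
    (xstar : EuclideanSpace ℝ (Fin n)) (hxstar : xstar ∈ Sstar)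
    (Fstar : ℝ) (hFstar : Fstar = F xstar)
    (κ ε : ℝ) (hκ : 0 < κ) (hε : 0 < ε)
    (hgrow : ∀ x ∈ s, ‖x - xstar‖ ≤ ε →
      F x - Fstar ≥ (κ / 2) * (Metric.infDist x Sstar) ^ 2)
    (x : ℕ → EuclideanSpace ℝ (Fin n)) (hxs : ∀ k, x k ∈ s)
    (α : ℕ → ℝ)
    (hfejer : ∀ k : ℕ, ∀ u ∈ s,
      ‖x k - u‖ ^ 2 - ‖x (k + 1) - u‖ ^ 2 ≥ 2 * α k * (F (x (k + 1)) - F u))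
    (hdec : ∀ k : ℕ, F (x (k + 1)) ≤ F (x k) - ‖x (k + 1) - x k‖ ^ 2 / (2 * α k))
    (a : ℝ) (ha : 0 < a) (K : ℕ) (hαK : ∀ k > K, 2 * a ≤ α k)
    (hconvseq : Tendsto x atTop (𝓝 xstar)) :
    ∃ K' : ℕ, ∀ k > K',
      ‖x (k + 1) - xstar‖ ≤ (1 / Real.sqrt (1 + a * κ / 4)) * ‖x k - xstar‖ ∧
      F (x (k + 1)) - Fstar ≤
        ((Real.sqrt (1 + a * κ / 4) + 1) / (2 * Real.sqrt (1 + a * κ / 4))) *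
          (F (x k) - Fstar) := by
  subst hFstar
  have mem_Sstar : ∀ u ∈ Sstar, u ∈ s ∧ ∀ y ∈ s, F u ≤ F y := fun u hu => by rwa [hSstar] at hu
  obtain ⟨hxstar_s, hxstar_min⟩ := mem_Sstar xstar hxstar
  have hSne : Sstar.Nonempty := ⟨xstar, hxstar⟩
  have hβ : ∀ k > K, 4 * a ≤ 2 * α k := fun k hk => by linarith [hαK k hk]
  have hmono : ∀ u ∈ Sstar, ∀ m ≥ K + 1, dist (x (m + 1)) u ≤ dist (x m) u := by
    intro u hu m hm
    rw [dist_eq_norm, dist_eq_norm, ← sq_le_sq₀ (norm_nonneg _) (norm_nonneg _)]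
    nlinarith [hfejer m u (mem_Sstar u hu).1, hβ m hm, (mem_Sstar u hu).2 _ (hxs (m + 1))]
  obtain ⟨N, hN⟩ := Metric.tendsto_atTop.mp hconvseq ε hε
  refine ⟨max K N, fun k hk => ?_⟩
  have hgrowk := hgrow (x (k + 1)) (hxs _) (by rw [← dist_eq_norm]; exact (hN _ (by omega)).le)
  constructor
  · have hnear := dist_le_two_mul_infDist_of_tendsto hSne hmono hconvseq (k := k + 1) (by omega)
    rw [dist_eq_norm] at hnear
    exact iterate_contraction ha hκ (hβ k (by omega)) (by linarith [hfejer k _ hxstar_s])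
      hgrowk (norm_nonneg _) (norm_nonneg _) hnear
  · have hfejer_S := le_sq_dist_add_mul_infDist hSne (y := x k) (z := x (k + 1))
      (c := 2 * α k * (F (x (k + 1)) - F xstar)) fun u hu => by
        have hFu : F u = F xstar :=
          le_antisymm ((mem_Sstar u hu).2 _ hxstar_s) (hxstar_min _ (mem_Sstar u hu).1)
        rw [dist_eq_norm, dist_eq_norm, ← hFu]
        linarith [hfejer k u (mem_Sstar u hu).1]
    rw [dist_eq_norm] at hfejer_S
    exact value_contraction ha hκ (hβ k (by omega)) hfejer_S (by linarith [hdec k]) hgrowk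

/-- Q-linear convergence of forward-backward splitting iterates and function
values under the quadratic growth condition (metric subregularity of `∂F`). -/
theorem stmt_11 (n : ℕ) (s : Set (EuclideanSpace ℝ (Fin n))) (hs : s.Nonempty)
    (hsconv : Convex ℝ s)
    (F : EuclideanSpace ℝ (Fin n) → ℝ) (hF : ConvexOn ℝ s F)
    (Sstar : Set (EuclideanSpace ℝ (Fin n)))
    (hSstar : Sstar = {u ∈ s | ∀ y ∈ s, F u ≤ F y}) (hSne : Sstar.Nonempty)
    (xstar : EuclideanSpace ℝ (Fin n)) (hxstar : xstar ∈ Sstar)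
    (Fstar : ℝ) (hFstar : Fstar = F xstar)
    (κ ε : ℝ) (hκ : 0 < κ) (hε : 0 < ε)
    (hgrow : ∀ x ∈ s, ‖x - xstar‖ ≤ ε →
      F x - Fstar ≥ (κ / 2) * (Metric.infDist x Sstar) ^ 2)
    (x : ℕ → EuclideanSpace ℝ (Fin n)) (hxs : ∀ k, x k ∈ s)
    (α : ℕ → ℝ)
    (hfejer : ∀ k : ℕ, ∀ u ∈ s,
      ‖x k - u‖ ^ 2 - ‖x (k + 1) - u‖ ^ 2 ≥ 2 * α k * (F (x (k + 1)) - F u))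
    (hdec : ∀ k : ℕ, F (x (k + 1)) ≤ F (x k) - ‖x (k + 1) - x k‖ ^ 2 / (2 * α k))
    (a : ℝ) (ha : 0 < a) (K : ℕ) (hαK : ∀ k > K, 2 * a ≤ α k)
    (hconvseq : Tendsto x atTop (𝓝 xstar)) :
    ∃ K' : ℕ, ∀ k > K',
      ‖x (k + 1) - xstar‖ ≤ (1 / Real.sqrt (1 + a * κ / 4)) * ‖x k - xstar‖ ∧
      F (x (k + 1)) - Fstar ≤
        ((Real.sqrt (1 + a * κ / 4) + 1) / (2 * Real.sqrt (1 + a * κ / 4))) *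
          (F (x k) - Fstar) :=
  stmt_11_general n s F Sstar hSstar xstar hxstar Fstar hFstar κ ε hκ hε hgrow x hxs α hfejer hdec a
    ha K hαK hconvseq
end

section
/- Let s ⊆ ℝⁿ be a nonempty convex set, let F : ℝⁿ → ℝ be convex on s, let x* ∈ s minimize F over s with F* := F(x*). Assume the pointwise quadratic growth condition: there exist κ, ε > 0 with F(x) − F* ≥ (κ/2)·‖x − x*‖² for all x ∈ s with ‖x − x*‖ ≤ ε (equivalent to strong metric subregularity of ∂F at x* for 0). Suppose the sequences (xᵏ) ⊆ s and (αₖ) satisfy the Fejér inequality ‖xᵏ − u‖² − ‖xᵏ⁺¹ − u‖² ≥ 2αₖ·[F(xᵏ⁺¹) − F(u)] for all k ∈ ℕ and u ∈ s, the sufficient decrease F(xᵏ⁺¹) ≤ F(xᵏ) − ‖xᵏ⁺¹ − xᵏ‖²/(2αₖ) for all k, xᵏ → x*, and αₖ ≥ 2α > 0 for all k larger than some K ∈ ℕ. Then x* is the unique minimizer of F over s, and there exists K' ∈ ℕ such that for all k > K': ‖xᵏ⁺¹ − x*‖ ≤ (1/√(1 + ακ))·‖xᵏ − x*‖ and F(xᵏ⁺¹)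 − F* ≤ ((√(1 + ακ) + 1)/(2√(1 + ακ)))·(F(xᵏ) − F*). -/
/-!
Fejér's inequality at `u = x⋆`, together with quadratic growth at `xᵏ⁺¹`, gives
`(1 + aκ) ‖xᵏ⁺¹ - x⋆‖² ≤ ‖xᵏ - x⋆‖²`. For the values, apply Fejér's inequality at the
convex combination `u = λ x⋆ + (1 - λ) xᵏ`: convexity bounds `F u - F⋆` by
`(1 - λ) (F xᵏ - F⋆)`, and quadratic growth at `xᵏ` bounds `‖xᵏ - u‖² = λ² ‖xᵏ - x⋆‖²` by
`2λ²/κ · (F xᵏ - F⋆)`. The choice `λ = 1 - 1/√(1 + aκ)` yields the stated factor.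
Uniqueness: by convexity `F ≤ F⋆` on the segment from `x⋆` to another minimizer, contradicting
growth near `x⋆`.
-/

open Filter Topology

lemma one_sub_inv_sqrt_one_add_le {t : ℝ} (ht : 0 ≤ t) : 1 - (√(1 + t))⁻¹ ≤ t := by
  have hc : 1 ≤ √(1 + t) := Real.one_le_sqrt.2 (by linarith)
  have hc2 : √(1 + t) ^ 2 = 1 + t := Real.sq_sqrt (by linarith)
  have hcinv : √(1 + t) * (√(1 + t))⁻¹ = 1 := mul_inv_cancel₀ (by positivity)
  have hinv : (√(1 + t))⁻¹ ≤ 1 := inv_le_one_of_one_le₀ hc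
  nlinarith [mul_nonneg (sub_nonneg.2 hc) (sub_nonneg.2 hinv)]

lemma le_one_div_sqrt_mul_of_mul_sq_le {r δ δ' : ℝ} (hr : 0 < r) (hδ : 0 ≤ δ)
    (h : r * δ' ^ 2 ≤ δ ^ 2) : δ' ≤ 1 / √r * δ := by
  have hsq : (√r * δ') ^ 2 ≤ δ ^ 2 := by rwa [mul_pow, Real.sq_sqrt hr.le]
  rw [one_div_mul_eq_div, le_div_iff₀ (Real.sqrt_pos.2 hr), mul_comm]
  exact abs_le_of_sq_le_sq' hsq hδ |>.2

lemma norm_sub_le_of_fejer_of_quadratic_growth {E : Type*} [SeminormedAddCommGroup E]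
    {F : E → ℝ} {x₀ x y : E} {α κ a : ℝ} (ha : 0 < a) (hκ : 0 < κ)
    (hα : 2 * a ≤ α)
    (hfejer : ‖x - x₀‖ ^ 2 - ‖y - x₀‖ ^ 2 ≥ 2 * α * (F y - F x₀))
    (hgrow : F y - F x₀ ≥ κ / 2 * ‖y - x₀‖ ^ 2) :
    ‖y - x₀‖ ≤ 1 / √(1 + a * κ) * ‖x - x₀‖ := by
  refine le_one_div_sqrt_mul_of_mul_sq_le (by positivity) (norm_nonneg _) ?_
  nlinarith [mul_le_mul_of_nonneg_left hgrow (by linarith : 0 ≤ α),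
    mul_nonneg (mul_nonneg (by linarith : 0 ≤ α - 2 * a) hκ.le) (sq_nonneg ‖y - x₀‖),
    mul_nonneg (mul_nonneg ha.le hκ.le) (sq_nonneg ‖y - x₀‖)]

section QuadraticGrowth

variable {E : Type*} [NormedAddCommGroup E] [NormedSpace ℝ E] {s : Set E} {F : E → ℝ}
  {x₀ x y : E} {α κ : ℝ}

lemma ConvexOn.eq_of_le_of_quadratic_growth {ε : ℝ} (hF : ConvexOn ℝ s F) (hx₀ : x₀ ∈ s)
    (hκ : 0 < κ) (hε : 0 < ε)
    (hgrow : ∀ x ∈ s, ‖x - x₀‖ ≤ ε → F x - F x₀ ≥ κ / 2 * ‖x - x₀‖ ^ 2)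
    (hx : x ∈ s) (hFx : F x ≤ F x₀) : x = x₀ := by
  by_contra hne
  set d := ‖x - x₀‖
  have hd : 0 < d := norm_pos_iff.2 (sub_ne_zero.2 hne)
  set t := min 1 (ε / d)
  have ht0 : 0 < t := lt_min one_pos (div_pos hε hd)
  have ht1 : t ≤ 1 := min_le_left _ _
  have htd : t * d ≤ ε := (le_div_iff₀ hd).1 (min_le_right _ _)
  set z := (1 - t) • x₀ + t • x
  have hz : z ∈ s := hF.1 hx₀ hx (by linarith) ht0.le (by ring)
  have hzdist : ‖z - x₀‖ = t * d := by
    rw [show z - x₀ = t • (x - x₀) by module, norm_smul, Real.norm_of_nonneg ht0.le]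
  have hFz : F z ≤ (1 - t) * F x₀ + t * F x := hF.2 hx₀ hx (by linarith) ht0.le (by ring)
  have hgz := hgrow z hz (hzdist ▸ htd)
  rw [hzdist] at hgz
  nlinarith [mul_pos hκ (pow_pos (mul_pos ht0 hd) 2)]

lemma sub_le_of_fejer_of_quadratic_growth {l : ℝ} (hF : ConvexOn ℝ s F) (hx₀ : x₀ ∈ s)
    (hx : x ∈ s) (hα : 0 < α) (hκ : 0 < κ) (hl0 : 0 ≤ l) (hl1 : l ≤ 1)
    (hfejer : ∀ u ∈ s, ‖x - u‖ ^ 2 - ‖y - u‖ ^ 2 ≥ 2 * α * (F y - F u))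
    (hgrow : F x - F x₀ ≥ κ / 2 * ‖x - x₀‖ ^ 2) :
    F y - F x₀ ≤ (1 - l + l ^ 2 / (α * κ)) * (F x - F x₀) := by
  set u := l • x₀ + (1 - l) • x
  have hu : u ∈ s := hF.1 hx₀ hx hl0 (by linarith) (by ring)
  have hFu : F u ≤ l * F x₀ + (1 - l) * F x := hF.2 hx₀ hx hl0 (by linarith) (by ring)
  have hxu : ‖x - u‖ = l * ‖x - x₀‖ := by
    rw [show x - u = l • (x - x₀) by module, norm_smul, Real.norm_of_nonneg hl0]
  have hstep : 2 * α * (F y - F u) ≤ l ^ 2 * ‖x - x₀‖ ^ 2 := by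
    have := hfejer u hu
    rw [hxu, mul_pow] at this
    linarith [sq_nonneg ‖y - u‖]
  have hdist : κ * (l ^ 2 * ‖x - x₀‖ ^ 2) ≤ 2 * l ^ 2 * (F x - F x₀) := by
    nlinarith [mul_le_mul_of_nonneg_left hgrow (sq_nonneg l)]
  have hFyu : F y - F u ≤ l ^ 2 / (α * κ) * (F x - F x₀) := by
    rw [div_mul_eq_mul_div, le_div_iff₀ (by positivity)]
    nlinarith [mul_le_mul_of_nonneg_left hstep hκ.le]
  linarith

lemma sub_le_mul_of_fejer_of_quadratic_growth {a : ℝ} (hF : ConvexOn ℝ s F) (hx₀ : x₀ ∈ s)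
    (hx : x ∈ s) (ha : 0 < a) (hκ : 0 < κ) (hα : 2 * a ≤ α)
    (hfejer : ∀ u ∈ s, ‖x - u‖ ^ 2 - ‖y - u‖ ^ 2 ≥ 2 * α * (F y - F u))
    (hgrow : F x - F x₀ ≥ κ / 2 * ‖x - x₀‖ ^ 2) :
    F y - F x₀ ≤ (√(1 + a * κ) + 1) / (2 * √(1 + a * κ)) * (F x - F x₀) := by
  set c := √(1 + a * κ)
  have hc : 1 ≤ c := Real.one_le_sqrt.2 (by nlinarith)
  set l := 1 - c⁻¹
  have hl0 : 0 ≤ l := sub_nonneg.2 (inv_le_one_of_one_le₀ hc)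
  have hl1 : l ≤ 1 := sub_le_self _ (by positivity)
  have hlaκ : l ≤ a * κ := one_sub_inv_sqrt_one_add_le (by positivity)
  have hcoef : l ^ 2 / (α * κ) ≤ l / 2 := by
    rw [div_le_iff₀ (by nlinarith)]
    nlinarith [mul_le_mul_of_nonneg_right hα hκ.le]
  have hval : 0 ≤ F x - F x₀ := le_trans (by positivity) hgrow
  calc F y - F x₀ ≤ (1 - l + l ^ 2 / (α * κ)) * (F x - F x₀) :=
        sub_le_of_fejer_of_quadratic_growth hF hx₀ hx (by linarith) hκ hl0 hl1 hfejer hgrow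
    _ ≤ (1 - l / 2) * (F x - F x₀) := by gcongr; linarith
    _ = (c + 1) / (2 * c) * (F x - F x₀) := by
        congr 1; simp only [l]; field_simp; ring

end QuadraticGrowth

theorem stmt_12_general (n : ℕ) (s : Set (EuclideanSpace ℝ (Fin n)))
    (F : EuclideanSpace ℝ (Fin n) → ℝ) (hF : ConvexOn ℝ s F)
    (xstar : EuclideanSpace ℝ (Fin n)) (hxstars : xstar ∈ s)
    (Fstar : ℝ) (hFstar : Fstar = F xstar)
    (κ ε : ℝ) (hκ : 0 < κ) (hε : 0 < ε)
    (hgrow : ∀ x ∈ s, ‖x - xstar‖ ≤ ε →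
      F x - Fstar ≥ (κ / 2) * ‖x - xstar‖ ^ 2)
    (x : ℕ → EuclideanSpace ℝ (Fin n)) (hxs : ∀ k, x k ∈ s)
    (α : ℕ → ℝ)
    (hfejer : ∀ k : ℕ, ∀ u ∈ s,
      ‖x k - u‖ ^ 2 - ‖x (k + 1) - u‖ ^ 2 ≥ 2 * α k * (F (x (k + 1)) - F u))
    (hconvseq : Tendsto x atTop (𝓝 xstar))
    (a : ℝ) (ha : 0 < a) (K : ℕ) (hαK : ∀ k > K, 2 * a ≤ α k) :
    (∀ u ∈ s, (∀ y ∈ s, F u ≤ F y) → u = xstar) ∧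
    ∃ K' : ℕ, ∀ k > K',
      ‖x (k + 1) - xstar‖ ≤ (1 / Real.sqrt (1 + a * κ)) * ‖x k - xstar‖ ∧
      F (x (k + 1)) - Fstar ≤
        ((Real.sqrt (1 + a * κ) + 1) / (2 * Real.sqrt (1 + a * κ))) *
          (F (x k) - Fstar) := by
  subst hFstar
  refine ⟨fun u hu humin => hF.eq_of_le_of_quadratic_growth hxstars hκ hε hgrow hu
    (humin xstar hxstars), ?_⟩
  have hnear : ∀ᶠ k in atTop, ‖x k - xstar‖ ≤ ε := by
    simpa only [Metric.mem_closedBall, dist_eq_norm] using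
      hconvseq.eventually (Metric.closedBall_mem_nhds xstar hε)
  have hstep : ∀ᶠ k in atTop, 2 * a ≤ α k := eventually_atTop.2 ⟨K + 1, hαK⟩
  obtain ⟨K', hK'⟩ := eventually_atTop.1
    ((hnear.and ((tendsto_add_atTop_nat 1).eventually hnear)).and hstep)
  refine ⟨K', fun k hk => ?_⟩
  obtain ⟨⟨hk0, hk1⟩, hαk⟩ := hK' k hk.le
  exact ⟨norm_sub_le_of_fejer_of_quadratic_growth ha hκ hαk (hfejer k xstar hxstars)
      (hgrow _ (hxs _) hk1),
    sub_le_mul_of_fejer_of_quadratic_growth hF hxstars (hxs k) ha hκ hαk (hfejer k)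
      (hgrow _ (hxs k) hk0)⟩

/-- Sharper Q-linear convergence of forward-backward splitting under the pointwise
quadratic growth condition (strong metric subregularity of `∂F`), together with
uniqueness of the minimizer. -/
theorem stmt_12 (n : ℕ) (s : Set (EuclideanSpace ℝ (Fin n))) (hs : s.Nonempty)
    (hsconv : Convex ℝ s)
    (F : EuclideanSpace ℝ (Fin n) → ℝ) (hF : ConvexOn ℝ s F)
    (xstar : EuclideanSpace ℝ (Fin n)) (hxstars : xstar ∈ s)
    (hxstarmin : ∀ y ∈ s, F xstar ≤ F y)
    (Fstar : ℝ) (hFstar : Fstar = F xstar)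
    (κ ε : ℝ) (hκ : 0 < κ) (hε : 0 < ε)
    (hgrow : ∀ x ∈ s, ‖x - xstar‖ ≤ ε →
      F x - Fstar ≥ (κ / 2) * ‖x - xstar‖ ^ 2)
    (x : ℕ → EuclideanSpace ℝ (Fin n)) (hxs : ∀ k, x k ∈ s)
    (α : ℕ → ℝ)
    (hfejer : ∀ k : ℕ, ∀ u ∈ s,
      ‖x k - u‖ ^ 2 - ‖x (k + 1) - u‖ ^ 2 ≥ 2 * α k * (F (x (k + 1)) - F u))
    (hdec : ∀ k : ℕ, F (x (k + 1)) ≤ F (x k) - ‖x (k + 1) - x k‖ ^ 2 / (2 * α k))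
    (hconvseq : Tendsto x atTop (𝓝 xstar))
    (a : ℝ) (ha : 0 < a) (K : ℕ) (hαK : ∀ k > K, 2 * a ≤ α k) :
    (∀ u ∈ s, (∀ y ∈ s, F u ≤ F y) → u = xstar) ∧
    ∃ K' : ℕ, ∀ k > K',
      ‖x (k + 1) - xstar‖ ≤ (1 / Real.sqrt (1 + a * κ)) * ‖x k - xstar‖ ∧
      F (x (k + 1)) - Fstar ≤
        ((Real.sqrt (1 + a * κ) + 1) / (2 * Real.sqrt (1 + a * κ))) *
          (F (x k) - Fstar) :=
  stmt_12_general n s F hF xstar hxstars Fstar hFstar κ ε hκ hε hgrow x hxs α hfejer hconvseq a ha K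
    hαK
end

section
/- Let A be a real m×n matrix with nonnegative entries, each of whose rows aᵢ is nonzero, and let b ∈ ℝᵐ have strictly positive entries. Let D := {x ∈ ℝⁿ : xⱼ ≥ 0 for all j, and (Ax)ᵢ > 0 for all i}, and for x ∈ D define f(x) := Σᵢ [bᵢ·log(bᵢ/(Ax)ᵢ) + (Ax)ᵢ − bᵢ]. Let S* := {x ∈ D : f(x) ≤ f(y) for all y ∈ D} and suppose x̄ ∈ S*. Let v := ∇f(x̄) = Σᵢ (1 − bᵢ/⟨aᵢ, x̄⟩)·aᵢ ∈ ℝⁿ. Then the optimal solution set is the polyhedron S* = {u ∈ ℝⁿ : uⱼ ≥ 0 for all j, A·u = A·x̄, and ⟨v, u⟩ = 0}. -/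
/-!
Each row term `t ↦ b log (b / t) + t - b` is strictly convex on `(0, ∞)`, so `f` is a strictly
convex function of `Ax`: two minimizers `x̄, u` must have `Au = Ax̄`, since otherwise their midpoint
would do strictly better. Along the ray `t ↦ t x̄` we get
`f (t x̄) - f x̄ = (t - 1) ∑ (Ax̄)ᵢ - (∑ bᵢ) log t`, whose minimum at `t = 1` forces
`∑ bᵢ = ∑ (Ax̄)ᵢ`. As `v = Aᵀ w` with `wᵢ = 1 - bᵢ / (Ax̄)ᵢ`, for `Au = Ax̄` this gives
`⟨v, u⟩ = ⟨w, Ax̄⟩ = ∑ ((Ax̄)ᵢ - bᵢ) = 0`. Conversely every `u ≥ 0` with `Au = Ax̄` lies in `D` and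
has `f u = f x̄`.
-/

open Finset Real Set Matrix

noncomputable def poissonLoss (b t : ℝ) : ℝ := b * log (b / t) + t - b

lemma poissonLoss_of_pos {b t : ℝ} (hb : 0 < b) (ht : 0 < t) :
    poissonLoss b t = b * log b - b * log t + t - b := by
  rw [poissonLoss, log_div hb.ne' ht.ne']
  ring

lemma poissonLoss_mul {b c t : ℝ} (hb : 0 < b) (hc : 0 < c) (ht : 0 < t) :
    poissonLoss b (t * c) = poissonLoss b c + ((t - 1) * c - b * log t) := by
  rw [poissonLoss_of_pos hb (mul_pos ht hc), poissonLoss_of_pos hb hc, log_mul ht.ne' hc.ne']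
  ring

lemma strictConvexOn_poissonLoss {b : ℝ} (hb : 0 < b) :
    StrictConvexOn ℝ (Ioi 0) (poissonLoss b) := by
  refine ⟨convex_Ioi 0, fun x hx y hy hxy α β hα hβ hαβ => ?_⟩
  have hlog := strictConcaveOn_log_Ioi.2 hx hy hxy hα hβ hαβ
  have hz : 0 < α • x + β • y := convex_Ioi 0 hx hy hα.le hβ.le hαβ
  simp only [smul_eq_mul] at hlog hz ⊢
  rw [poissonLoss_of_pos hb hz, poissonLoss_of_pos hb hx, poissonLoss_of_pos hb hy]
  obtain rfl : β = 1 - α := by linarith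
  nlinarith [mul_lt_mul_of_pos_left hlog hb]

theorem StrictConvexOn.sum_pi {ι : Type*} [Fintype ι] {s : ι → Set ℝ} {φ : ι → ℝ → ℝ}
    (hφ : ∀ i, StrictConvexOn ℝ (s i) (φ i)) :
    StrictConvexOn ℝ (univ.pi s) (fun y : ι → ℝ => ∑ i, φ i (y i)) := by
  refine ⟨convex_pi fun i _ => (hφ i).1, fun x hx y hy hxy α β hα hβ hαβ => ?_⟩
  obtain ⟨i₀, hi₀⟩ := Function.ne_iff.mp hxy
  simp only [Pi.add_apply, Pi.smul_apply, smul_eq_mul, mul_sum, ← sum_add_distrib]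
  exact sum_lt_sum
    (fun i _ => (hφ i).convexOn.2 (hx i trivial) (hy i trivial) hα.le hβ.le hαβ)
    ⟨i₀, mem_univ _, (hφ i₀).2 (hx i₀ trivial) (hy i₀ trivial) hi₀ hα hβ hαβ⟩

theorem StrictConvexOn.map_eq_of_isMinOn_comp {E F : Type*} [AddCommGroup E] [Module ℝ E]
    [AddCommGroup F] [Module ℝ F] {g : F → ℝ} {t : Set F} {L : E →ₗ[ℝ] F} {D : Set E}
    {x u : E} (hg : StrictConvexOn ℝ t g) (hD : Convex ℝ D) (hLD : MapsTo L D t)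
    (hx : IsMinOn (g ∘ L) D x) (hu : IsMinOn (g ∘ L) D u) (hxD : x ∈ D) (huD : u ∈ D) :
    L x = L u := by
  have hmin {y : E} (hy : IsMinOn (g ∘ L) D y) : IsMinOn g (L '' D) (L y) := by
    rintro _ ⟨z, hz, rfl⟩
    exact hy hz
  exact (hg.subset hLD.image_subset (hD.linear_image L)).eq_of_isMinOn (hmin hx) (hmin hu)
    (mem_image_of_mem L hxD) (mem_image_of_mem L huD)

lemma eq_of_forall_mul_log_le {B C : ℝ} (h : ∀ t, 0 < t → B * log t ≤ (t - 1) * C) :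
    B = C := by
  have hmin : IsLocalMin (fun t => (t - 1) * C - B * log t) 1 := by
    filter_upwards [Ioi_mem_nhds one_pos] with t ht
    simpa using h t ht
  have hderiv : HasDerivAt (fun t => (t - 1) * C - B * log t) (1 * C - B * 1⁻¹) 1 :=
    (((hasDerivAt_id' 1).sub_const 1).mul_const C).sub ((hasDerivAt_log one_ne_zero).const_mul B)
  linarith [hmin.hasDerivAt_eq_zero hderiv]

section PoissonObjective

variable {ι E : Type*} [Fintype ι] [AddCommGroup E] [Module ℝ E]

noncomputable def poissonObjective (L : E →ₗ[ℝ] ι → ℝ) (b : ι → ℝ) (x : E) : ℝ :=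
  ∑ i, poissonLoss (b i) (L x i)

variable {L : E →ₗ[ℝ] ι → ℝ} {b : ι → ℝ} {D : Set E} {x : E}

lemma sum_eq_sum_of_isMinOn_poissonObjective (hb : ∀ i, 0 < b i) (hLx : ∀ i, 0 < L x i)
    (hx : IsMinOn (poissonObjective L b) D x) (hray : ∀ t : ℝ, 0 < t → t • x ∈ D) :
    ∑ i, b i = ∑ i, L x i := by
  refine eq_of_forall_mul_log_le fun t ht => ?_
  have hle := isMinOn_iff.1 hx _ (hray t ht)
  simp only [poissonObjective, map_smul, Pi.smul_apply, smul_eq_mul,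
    poissonLoss_mul (hb _) (hLx _) ht, sum_add_distrib] at hle
  have hgap : 0 ≤ ∑ i, ((t - 1) * L x i - b i * log t) := by linarith
  rw [sum_sub_distrib, ← mul_sum, ← sum_mul] at hgap
  linarith

lemma map_eq_of_isMinOn_poissonObjective (hb : ∀ i, 0 < b i) (hD : Convex ℝ D)
    (hLD : ∀ y ∈ D, ∀ i, 0 < L y i) {u : E} (hx : IsMinOn (poissonObjective L b) D x)
    (hu : IsMinOn (poissonObjective L b) D u) (hxD : x ∈ D) (huD : u ∈ D) : L x = L u :=
  (StrictConvexOn.sum_pi fun i => strictConvexOn_poissonLoss (hb i)).map_eq_of_isMinOn_comp hD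
    (fun y hy i _ => hLD y hy i) hx hu hxD huD

end PoissonObjective

lemma vecMul_dotProduct_eq_zero {ι κ : Type*} [Fintype ι] [Fintype κ] {A : Matrix ι κ ℝ}
    {b c : ι → ℝ} (hc : ∀ i, 0 < c i) (hsum : ∑ i, b i = ∑ i, c i) {u : κ → ℝ}
    (hAu : A *ᵥ u = c) : ((fun i => 1 - b i / c i) ᵥ* A) ⬝ᵥ u = 0 := by
  rw [← dotProduct_mulVec, hAu]
  simp only [dotProduct, sub_mul, one_mul, div_mul_cancel₀ _ (hc _).ne', sum_sub_distrib, hsum,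
    sub_self]

lemma convex_nonneg_mulVec_pos {ι κ : Type*} [Fintype ι] [Fintype κ] (A : Matrix ι κ ℝ) :
    Convex ℝ {x : EuclideanSpace ℝ κ | (∀ j, 0 ≤ x j) ∧ ∀ i, 0 < (A *ᵥ x) i} := by
  rintro x ⟨hx0, hxA⟩ y ⟨hy0, hyA⟩ α β hα hβ hαβ
  refine ⟨fun j => ?_, fun i => ?_⟩
  · simpa using add_nonneg (mul_nonneg hα (hx0 j)) (mul_nonneg hβ (hy0 j))
  · simpa [mulVec_add, mulVec_smul] using convex_Ioi (0 : ℝ) (hxA i) (hyA i) hα hβ hαβ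

theorem stmt_15_general (m n : ℕ) (A : Matrix (Fin m) (Fin n) ℝ)
    (b : Fin m → ℝ) (hb : ∀ i, 0 < b i)
    (D : Set (EuclideanSpace ℝ (Fin n)))
    (hD : D = {x : EuclideanSpace ℝ (Fin n) | (∀ j, 0 ≤ x j) ∧ ∀ i, 0 < A.mulVec x i})
    (f : EuclideanSpace ℝ (Fin n) → ℝ)
    (hf : ∀ x, f x = ∑ i, (b i * Real.log (b i / A.mulVec x i) + A.mulVec x i - b i))
    (Sstar : Set (EuclideanSpace ℝ (Fin n)))
    (hSstar : Sstar = {x ∈ D | ∀ y ∈ D, f x ≤ f y})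
    (xbar : EuclideanSpace ℝ (Fin n)) (hxbar : xbar ∈ Sstar)
    (v : Fin n → ℝ)
    (hv : ∀ j, v j = ∑ i, (1 - b i / A.mulVec xbar i) * A i j) :
    Sstar = {u : EuclideanSpace ℝ (Fin n) |
      (∀ j, 0 ≤ u j) ∧ A.mulVec u = A.mulVec xbar ∧ ∑ j, v j * u j = 0} := by
  let L : EuclideanSpace ℝ (Fin n) →ₗ[ℝ] Fin m → ℝ :=
    A.mulVecLin ∘ₗ (WithLp.linearEquiv 2 ℝ (Fin n → ℝ)).toLinearMap
  obtain rfl : f = poissonObjective L b := funext hf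
  obtain rfl : v = (fun i => 1 - b i / A.mulVec xbar i) ᵥ* A := funext hv
  subst hD hSstar
  obtain ⟨hxD, hxmin⟩ := hxbar
  have hsum : ∑ i, b i = ∑ i, A.mulVec xbar i :=
    sum_eq_sum_of_isMinOn_poissonObjective hb hxD.2 (isMinOn_iff.2 hxmin)
      fun t ht => ⟨fun j => by simpa using mul_nonneg ht.le (hxD.1 j),
        fun i => by simpa [mulVec_smul] using mul_pos ht (hxD.2 i)⟩
  ext u
  constructor
  · rintro ⟨huD, humin⟩
    have hAu : A.mulVec u = A.mulVec xbar :=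
      (map_eq_of_isMinOn_poissonObjective hb (convex_nonneg_mulVec_pos A) (fun y hy => hy.2)
        (isMinOn_iff.2 hxmin) (isMinOn_iff.2 humin) hxD huD).symm
    exact ⟨huD.1, hAu, vecMul_dotProduct_eq_zero hxD.2 hsum hAu⟩
  · rintro ⟨hu, hAu, -⟩
    have hLu : L u = L xbar := hAu
    have hfu : poissonObjective L b u = poissonObjective L b xbar := by
      simp only [poissonObjective, hLu]
    exact mem_sep ⟨hu, hAu ▸ hxD.2⟩ fun y hy => hfu ▸ hxmin y hy

/-- The optimal solution set of the Poisson linear inverse problem is the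
polyhedron `{u ≥ 0 : Au = Ax̄, ⟨∇f(x̄), u⟩ = 0}`. -/
theorem stmt_15 (m n : ℕ) (A : Matrix (Fin m) (Fin n) ℝ)
    (hA : ∀ i j, 0 ≤ A i j) (hrow : ∀ i, A i ≠ 0)
    (b : Fin m → ℝ) (hb : ∀ i, 0 < b i)
    (D : Set (EuclideanSpace ℝ (Fin n)))
    (hD : D = {x : EuclideanSpace ℝ (Fin n) | (∀ j, 0 ≤ x j) ∧ ∀ i, 0 < A.mulVec x i})
    (f : EuclideanSpace ℝ (Fin n) → ℝ)
    (hf : ∀ x, f x = ∑ i, (b i * Real.log (b i / A.mulVec x i) + A.mulVec x i - b i))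
    (Sstar : Set (EuclideanSpace ℝ (Fin n)))
    (hSstar : Sstar = {x ∈ D | ∀ y ∈ D, f x ≤ f y})
    (xbar : EuclideanSpace ℝ (Fin n)) (hxbar : xbar ∈ Sstar)
    (v : Fin n → ℝ)
    (hv : ∀ j, v j = ∑ i, (1 - b i / A.mulVec xbar i) * A i j) :
    Sstar = {u : EuclideanSpace ℝ (Fin n) |
      (∀ j, 0 ≤ u j) ∧ A.mulVec u = A.mulVec xbar ∧ ∑ j, v j * u j = 0} :=
  stmt_15_general m n A b hb D hD f hf Sstar hSstar xbar hxbar v hv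
end

section
/- Fix μ > 0 and let g(x) := μ‖x‖₁ = μΣⱼ|xⱼ| on ℝⁿ, whose subdifferential is ∂g(x) = {s ∈ ℝⁿ : sⱼ = μ·sgn(xⱼ) if xⱼ ≠ 0, and sⱼ ∈ [−μ, μ] if xⱼ = 0}. Let x* ∈ ℝⁿ and s̄ ∈ ∂g(x*). Define I := {j : |s̄ⱼ| = μ}, J := {j ∈ I : x*ⱼ ≠ 0}, K := {j ∈ I : x*ⱼ = 0}, and H(x*) := {u ∈ ℝⁿ : uⱼ = 0 for j ∉ I, and uⱼ·s̄ⱼ ≥ 0 for j ∈ K}. Then: (a) the graphical derivative set D∂g(x*|s̄)(u) is nonempty if and only if u ∈ H(x*); and (b) for every u ∈ H(x*), D∂g(x*|s̄)(u) = {v ∈ ℝⁿ : vⱼ = 0 for all j ∈ J, and uⱼ·vⱼ = 0 and s̄ⱼ·vⱼ ≤ 0 for all j ∈ K}. -/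
open Filter Topology

/-- The subdifferential of `g = μ‖·‖₁`:
`∂g(x) = {s : sⱼ = μ·sgn(xⱼ) if xⱼ ≠ 0, sⱼ ∈ [−μ, μ] if xⱼ = 0}`. -/
def l1Subdiff (n : ℕ) (μ : ℝ) (x : EuclideanSpace ℝ (Fin n)) :
    Set (EuclideanSpace ℝ (Fin n)) :=
  {s | ∀ j, (x j ≠ 0 → s j = μ * Real.sign (x j)) ∧ (x j = 0 → s j ∈ Set.Icc (-μ) μ)}

/-- The graphical derivative of a set-valued map `G` at `x̄` for `ȳ ∈ G(x̄)`:
`v ∈ DG(x̄|ȳ)(u)` iff there are sequences `uᵏ → u`, `vᵏ → v`, `tᵏ ↓ 0` with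
`ȳ + tᵏvᵏ ∈ G(x̄ + tᵏuᵏ)` for all `k`. -/
def graphDeriv {n : ℕ}
    (G : EuclideanSpace ℝ (Fin n) → Set (EuclideanSpace ℝ (Fin n)))
    (xbar ybar u : EuclideanSpace ℝ (Fin n)) : Set (EuclideanSpace ℝ (Fin n)) :=
  {v | ∃ (uk vk : ℕ → EuclideanSpace ℝ (Fin n)) (tk : ℕ → ℝ),
    Tendsto uk atTop (𝓝 u) ∧ Tendsto vk atTop (𝓝 v) ∧ (∀ k, 0 < tk k) ∧
    Tendsto tk atTop (𝓝 0) ∧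
    ∀ k, ybar + tk k • vk k ∈ G (xbar + tk k • uk k)}

/-!
The graph of `∂(μ|·|)` is polyhedral: near each of its points `(x̄, s̄)` it coincides with
`(x̄, s̄) + C` for a closed cone `C`, namely `{b = 0}` if `x̄ ≠ 0`, `{a = 0}` if `|s̄| < μ`, and
`{s̄a ≥ 0, ab = 0, s̄b ≤ 0}` at a kink `x̄ = 0`, `|s̄| = μ`. The graph of `∂(μ‖·‖₁)` is the
coordinatewise product of these. For a map whose graph is locally a translated closed cone `C`,
the graphical derivative is `C` itself: along defining sequences `(tᵏuᵏ, tᵏvᵏ)` eventually lies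
in `C`, hence so do `(uᵏ, vᵏ)` and their limit; conversely, constant sequences work.
-/

lemma exists_seq_pos_tendsto_zero_of_eventually {P : ℝ → Prop} (h : ∀ᶠ t in 𝓝[>] 0, P t) :
    ∃ tk : ℕ → ℝ, (∀ k, 0 < tk k) ∧ Tendsto tk atTop (𝓝 0) ∧ ∀ k, P (tk k) := by
  obtain ⟨tk, htk, hP⟩ :=
    exists_seq_forall_of_frequently (h.and self_mem_nhdsWithin).frequently
  exact ⟨tk, fun k => (hP k).2, (tendsto_nhdsWithin_iff.mp htk).1, fun k => (hP k).1⟩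

section GraphDeriv

variable {n : ℕ} {G : EuclideanSpace ℝ (Fin n) → Set (EuclideanSpace ℝ (Fin n))}
  {xbar ybar : EuclideanSpace ℝ (Fin n)}
  {C : Set (EuclideanSpace ℝ (Fin n) × EuclideanSpace ℝ (Fin n))}

theorem graphDeriv_eq_of_eventually_mem_iff_mem_cone (hC : IsClosed C)
    (hcone : ∀ t : ℝ, 0 < t → ∀ p ∈ C, t • p ∈ C)
    (hloc : ∀ᶠ p in 𝓝 0, ybar + p.2 ∈ G (xbar + p.1) ↔ p ∈ C)
    (u : EuclideanSpace ℝ (Fin n)) :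
    graphDeriv G xbar ybar u = {v | (u, v) ∈ C} := by
  ext v
  constructor
  · rintro ⟨uk, vk, tk, hu, hv, htk_pos, htk, hG⟩
    have hscaled : Tendsto (fun k => tk k • (uk k, vk k)) atTop (𝓝 0) := by
      simpa using htk.smul (hu.prodMk_nhds hv)
    refine hC.mem_of_tendsto (hu.prodMk_nhds hv) ?_
    filter_upwards [hscaled.eventually hloc] with k hk
    have hmem : tk k • (uk k, vk k) ∈ C := hk.mp (hG k)
    simpa [smul_smul, inv_mul_cancel₀ (htk_pos k).ne'] using
      hcone (tk k)⁻¹ (inv_pos.mpr (htk_pos k)) _ hmem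
  · intro huv
    have hray : Tendsto (fun t : ℝ => t • (u, v)) (𝓝[>] 0) (𝓝 0) := by
      simpa using ((continuous_id.smul continuous_const).tendsto (0 : ℝ)).mono_left
        nhdsWithin_le_nhds (f := fun t : ℝ => t • (u, v))
    have hev : ∀ᶠ t in 𝓝[>] (0 : ℝ), ybar + t • v ∈ G (xbar + t • u) := by
      filter_upwards [hray.eventually hloc, self_mem_nhdsWithin] with t ht htpos
      exact ht.mpr (hcone t htpos _ huv)
    obtain ⟨tk, htk_pos, htk, hG⟩ := exists_seq_pos_tendsto_zero_of_eventually hev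
    exact ⟨fun _ => u, fun _ => v, tk, tendsto_const_nhds, tendsto_const_nhds, htk_pos, htk, hG⟩

end GraphDeriv

/-- `∂(μ|·|)(x)`; membership in `l1Subdiff n μ x` is, by definition,
`∀ j, s j ∈ absSubdiff μ (x j)`. -/
def absSubdiff (μ x : ℝ) : Set ℝ :=
  {s | (x ≠ 0 → s = μ * Real.sign x) ∧ (x = 0 → s ∈ Set.Icc (-μ) μ)}

def absSubdiffGraphTangentCone (μ x s : ℝ) : Set (ℝ × ℝ) :=
  {p | (¬ |s| = μ → p.1 = 0) ∧ (|s| = μ ∧ x ≠ 0 → p.2 = 0) ∧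
    (|s| = μ ∧ x = 0 → 0 ≤ p.1 * s ∧ p.1 * p.2 = 0 ∧ s * p.2 ≤ 0)}

section AbsSubdiff

variable {μ x s : ℝ}

lemma mem_absSubdiff_of_ne_zero (hx : x ≠ 0) : s ∈ absSubdiff μ x ↔ s = μ * Real.sign x := by
  simp [absSubdiff, hx]

lemma mem_absSubdiff_zero : s ∈ absSubdiff μ 0 ↔ |s| ≤ μ := by
  simp [absSubdiff, abs_le]

lemma abs_mul_sign_of_ne_zero (hμ : 0 ≤ μ) (hx : x ≠ 0) : |μ * Real.sign x| = μ := by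
  rcases Real.sign_apply_eq_of_ne_zero x hx with h | h <;> simp [h, abs_of_nonneg hμ]

lemma eventually_sign_eq (hx : x ≠ 0) : ∀ᶠ y in 𝓝 x, y ≠ 0 ∧ Real.sign y = Real.sign x := by
  rcases hx.lt_or_gt with h | h
  · filter_upwards [eventually_lt_nhds h] with y hy
    exact ⟨hy.ne, by rw [Real.sign_of_neg hy, Real.sign_of_neg h]⟩
  · filter_upwards [eventually_gt_nhds h] with y hy
    exact ⟨hy.ne', by rw [Real.sign_of_pos hy, Real.sign_of_pos h]⟩

lemma eventually_mem_absSubdiff_iff_of_ne_zero (hx : x ≠ 0) :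
    ∀ᶠ p : ℝ × ℝ in 𝓝 0, μ * Real.sign x + p.2 ∈ absSubdiff μ (x + p.1) ↔ p.2 = 0 := by
  have hshift : Tendsto (fun p : ℝ × ℝ => x + p.1) (𝓝 0) (𝓝 x) :=
    (continuous_fst.const_add x).tendsto' 0 x (by simp)
  filter_upwards [hshift.eventually (eventually_sign_eq hx)] with p ⟨hne, hsign⟩
  rw [mem_absSubdiff_of_ne_zero hne, hsign, add_eq_left]

lemma eventually_mem_absSubdiff_zero_iff_of_abs_lt (hμ : 0 ≤ μ) (hs : |s| < μ) :
    ∀ᶠ p : ℝ × ℝ in 𝓝 0, s + p.2 ∈ absSubdiff μ p.1 ↔ p.1 = 0 := by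
  have hperturb : Tendsto (fun p : ℝ × ℝ => |s + p.2|) (𝓝 0) (𝓝 |s|) :=
    (continuous_snd.const_add s).abs.tendsto' 0 |s| (by simp)
  filter_upwards [hperturb.eventually (eventually_lt_nhds hs)] with p hp
  refine ⟨fun h => by_contra fun hne => ?_, fun h => ?_⟩
  · rw [(mem_absSubdiff_of_ne_zero hne).mp h, abs_mul_sign_of_ne_zero hμ hne] at hp
    exact hp.false
  · rw [h, mem_absSubdiff_zero]
    exact hp.le

lemma add_mem_absSubdiff_iff_of_abs_eq (hs : |s| = μ) {a b : ℝ} (hb : |b| < 2 * μ) :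
    s + b ∈ absSubdiff μ a ↔ 0 ≤ a * s ∧ a * b = 0 ∧ s * b ≤ 0 := by
  have hμ : 0 ≤ μ := hs ▸ abs_nonneg s
  rw [abs_lt] at hb
  rcases lt_trichotomy a 0 with ha | rfl | ha <;>
    [rw [mem_absSubdiff_of_ne_zero ha.ne, Real.sign_of_neg ha];
     rw [mem_absSubdiff_zero, abs_le];
     rw [mem_absSubdiff_of_ne_zero ha.ne', Real.sign_of_pos ha]] <;>
    rcases (abs_eq hμ).mp hs with rfl | rfl <;> constructor <;> intro h
  all_goals first
    | (exfalso; nlinarith)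
    | (refine ⟨?_, ?_, ?_⟩ <;> nlinarith)
    | (constructor <;> nlinarith [h.1, h.2.1, h.2.2])
    | nlinarith [h.1, h.2.1, h.2.2]

lemma smul_mem_absSubdiffGraphTangentCone {t : ℝ} (ht : 0 < t) {p : ℝ × ℝ}
    (hp : p ∈ absSubdiffGraphTangentCone μ x s) : t • p ∈ absSubdiffGraphTangentCone μ x s := by
  obtain ⟨h₁, h₂, h₃⟩ := hp
  refine ⟨fun h => by simp [h₁ h], fun h => by simp [h₂ h], fun h => ?_⟩
  obtain ⟨ha, hab, hb⟩ := h₃ h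
  simp only [Prod.smul_fst, Prod.smul_snd, smul_eq_mul]
  refine ⟨?_, ?_, ?_⟩
  · rw [mul_assoc]; exact mul_nonneg ht.le ha
  · linear_combination t ^ 2 * hab
  · rw [mul_left_comm]; exact mul_nonpos_of_nonneg_of_nonpos ht.le hb

lemma isClosed_absSubdiffGraphTangentCone : IsClosed (absSubdiffGraphTangentCone μ x s) :=
  (isClosed_imp isOpen_const (isClosed_eq continuous_fst continuous_const)).inter <|
    (isClosed_imp isOpen_const (isClosed_eq continuous_snd continuous_const)).inter <|
      isClosed_imp isOpen_const <|
        (isClosed_le continuous_const (continuous_fst.mul continuous_const)).inter <|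
          (isClosed_eq (continuous_fst.mul continuous_snd) continuous_const).inter
            (isClosed_le (continuous_const.mul continuous_snd) continuous_const)

theorem eventually_mem_absSubdiff_iff_mem_tangentCone (hμ : 0 < μ) (hs : s ∈ absSubdiff μ x) :
    ∀ᶠ p : ℝ × ℝ in 𝓝 0,
      s + p.2 ∈ absSubdiff μ (x + p.1) ↔ p ∈ absSubdiffGraphTangentCone μ x s := by
  by_cases hx : x = 0
  · subst hx
    rcases (mem_absSubdiff_zero.mp hs).lt_or_eq with hlt | heq
    · filter_upwards [eventually_mem_absSubdiff_zero_iff_of_abs_lt hμ.le hlt] with p hp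
      simp [absSubdiffGraphTangentCone, hlt.ne, hp]
    · have hsmall : ∀ᶠ p : ℝ × ℝ in 𝓝 0, |p.2| < 2 * μ :=
        (continuous_snd.abs.tendsto' 0 0 (by simp)).eventually (eventually_lt_nhds (by linarith))
      filter_upwards [hsmall] with p hp
      simp [absSubdiffGraphTangentCone, heq, add_mem_absSubdiff_iff_of_abs_eq heq hp]
  · obtain rfl := (mem_absSubdiff_of_ne_zero hx).mp hs
    filter_upwards [eventually_mem_absSubdiff_iff_of_ne_zero (μ := μ) hx] with p hp
    simp [absSubdiffGraphTangentCone, abs_mul_sign_of_ne_zero hμ.le hx, hx, hp]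

end AbsSubdiff

def l1SubdiffGraphTangentCone (n : ℕ) (μ : ℝ) (x s : EuclideanSpace ℝ (Fin n)) :
    Set (EuclideanSpace ℝ (Fin n) × EuclideanSpace ℝ (Fin n)) :=
  {p | ∀ j, (p.1 j, p.2 j) ∈ absSubdiffGraphTangentCone μ (x j) (s j)}

section L1Subdiff

variable {n : ℕ} {μ : ℝ} {x s : EuclideanSpace ℝ (Fin n)}

lemma continuous_coord_prod (j : Fin n) :
    Continuous fun p : EuclideanSpace ℝ (Fin n) × EuclideanSpace ℝ (Fin n) => (p.1 j, p.2 j) :=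
  ((PiLp.continuous_apply 2 _ j).comp continuous_fst).prodMk
    ((PiLp.continuous_apply 2 _ j).comp continuous_snd)

lemma isClosed_l1SubdiffGraphTangentCone : IsClosed (l1SubdiffGraphTangentCone n μ x s) := by
  simp only [l1SubdiffGraphTangentCone, Set.ofPred_forall]
  exact isClosed_iInter fun j =>
    isClosed_absSubdiffGraphTangentCone.preimage (continuous_coord_prod j)

lemma smul_mem_l1SubdiffGraphTangentCone {t : ℝ} (ht : 0 < t)
    {p : EuclideanSpace ℝ (Fin n) × EuclideanSpace ℝ (Fin n)}
    (hp : p ∈ l1SubdiffGraphTangentCone n μ x s) : t • p ∈ l1SubdiffGraphTangentCone n μ x s :=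
  fun j => by simpa using smul_mem_absSubdiffGraphTangentCone ht (hp j)

theorem eventually_mem_l1Subdiff_iff_mem_tangentCone (hμ : 0 < μ) (hs : s ∈ l1Subdiff n μ x) :
    ∀ᶠ p in 𝓝 0,
      s + p.2 ∈ l1Subdiff n μ (x + p.1) ↔ p ∈ l1SubdiffGraphTangentCone n μ x s := by
  have hcoord : ∀ j, ∀ᶠ p in 𝓝 (0 : EuclideanSpace ℝ (Fin n) × EuclideanSpace ℝ (Fin n)),
      s j + p.2 j ∈ absSubdiff μ (x j + p.1 j) ↔
        (p.1 j, p.2 j) ∈ absSubdiffGraphTangentCone μ (x j) (s j) := fun j =>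
    ((continuous_coord_prod j).tendsto' 0 0 (by simp)).eventually
      (eventually_mem_absSubdiff_iff_mem_tangentCone hμ (hs j))
  filter_upwards [eventually_all.mpr hcoord] with p hp
  exact forall_congr' hp

end L1Subdiff

/-- Computation of the graphical derivative of `∂(μ‖·‖₁)` at `x*` for `s̄`:
its domain is `H(x*)`, and on `H(x*)` it is given by the displayed formula. -/
theorem stmt_16 (n : ℕ) (μ : ℝ) (hμ : 0 < μ)
    (xstar sbar : EuclideanSpace ℝ (Fin n))
    (hsbar : sbar ∈ l1Subdiff n μ xstar)
    (H : Set (EuclideanSpace ℝ (Fin n)))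
    (hH : H = {u | ∀ j, (¬ |sbar j| = μ → u j = 0) ∧
      (|sbar j| = μ ∧ xstar j = 0 → 0 ≤ u j * sbar j)}) :
    (∀ u, (graphDeriv (l1Subdiff n μ) xstar sbar u).Nonempty ↔ u ∈ H) ∧
    (∀ u ∈ H, graphDeriv (l1Subdiff n μ) xstar sbar u =
      {v | ∀ j, (|sbar j| = μ ∧ xstar j ≠ 0 → v j = 0) ∧
        (|sbar j| = μ ∧ xstar j = 0 → u j * v j = 0 ∧ sbar j * v j ≤ 0)}) := by
  have hD : ∀ u, graphDeriv (l1Subdiff n μ) xstar sbar u =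
      {v | (u, v) ∈ l1SubdiffGraphTangentCone n μ xstar sbar} :=
    graphDeriv_eq_of_eventually_mem_iff_mem_cone isClosed_l1SubdiffGraphTangentCone
      (fun _ ht _ hp => smul_mem_l1SubdiffGraphTangentCone ht hp)
      (eventually_mem_l1Subdiff_iff_mem_tangentCone hμ hsbar)
  subst hH
  refine ⟨fun u => ?_, fun u hu => ?_⟩
  · rw [hD]
    refine ⟨fun ⟨v, hv⟩ j => ⟨(hv j).1, fun h => ((hv j).2.2 h).1⟩, fun hu => ⟨0, fun j => ?_⟩⟩
    simpa [absSubdiffGraphTangentCone] using hu j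
  · rw [hD]
    ext v
    exact forall_congr' fun j => by
      have huj := hu j
      simp only [absSubdiffGraphTangentCone, Set.mem_ofPred_eq] at huj ⊢
      tauto
end

section
/- Consider the Lasso problem: minimize F₂(x) := (1/2)‖Ax − b‖² + μ‖x‖₁ over ℝⁿ, where A is a real m×n matrix, b ∈ ℝᵐ and μ > 0. Let x* be an optimal solution. Define J := {j : x*ⱼ ≠ 0}, ℰ := {j : |(Aᵀ(Ax* − b))ⱼ| = μ}, K := ℰ \ J, and for j ∈ K set qⱼ := sgn((Aᵀ(Ax* − b))ⱼ) ∈ {−1, +1}. Then x* is the unique optimal solution of the Lasso problem if and only if the system Σ_{j∈J} xⱼ·Aⱼ − Σ_{j∈K} qⱼ·xⱼ·Aⱼ = 0 with xⱼ ≥ 0 for all j ∈ K has only the trivial solution xⱼ = 0 for all j ∈ J ∪ K (here Aⱼ ∈ ℝᵐ denotes the j-th column of A). Equivalently: for every u ∈ ℝⁿ with uⱼ = 0 for j ∉ J ∪ K and uⱼ ≥ 0 for j ∈ K, if A_J u_J − A_K Q_K u_K = 0 then u = 0, where A_J, A_K are the submatrices of A with columns indexed by J, K and Q_K = Diag((qⱼ)_{j∈K}).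 -/
/-!
At a minimizer `x` of `F(x) = ½‖Ax − b‖² + μ‖x‖₁`, with `r = Aᵀ(Ax − b)`, perturbing a single
coordinate shows `|r j| ≤ μ` and `μ |x j| + r j * x j = 0`. Expanding `F` around `x` then gives the
exact identity `F y = F x + ½‖A(y − x)‖² + ∑ j, (μ |y j| + r j * y j)` with nonnegative summands,
so the minimizers are exactly the `y` with `A y = A x` and `μ |y j| + r j * y j = 0` for all `j`.
Such a `y` vanishes off `J ∪ K` and has `-q j * y j ≥ 0` on `K`, so `y − x*` with its
`K`-coordinates multiplied by `-q j` solves the homogeneous system. Conversely a solution `u`,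
after the same change of signs on `K`, is a direction `v` with `A v = 0` along which `x* + t v`
stays a minimizer for small `t > 0`: on `J` the signs of `x*` do not change, and on `K` the new
terms cancel since `q j * r j = μ`.
-/

open Filter Topology Finset Matrix

lemma le_of_forall_mem_Ioc_le_add_mul {x y C : ℝ} (h : ∀ ε ∈ Set.Ioc (0 : ℝ) 1, x ≤ y + C * ε) :
    x ≤ y := by
  have hlim : Tendsto (fun ε => y + C * ε) (𝓝[>] 0) (𝓝 y) := by
    simpa using (tendsto_const_nhds.add (tendsto_const_nhds.mul tendsto_id)).mono_left
      (nhdsWithin_le_nhds (a := (0 : ℝ)))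
  exact ge_of_tendsto hlim (eventually_of_mem (Ioc_mem_nhdsGT one_pos) h)

lemma abs_le_and_mul_abs_add_mul_eq_zero {s a μ C : ℝ} (hμ : 0 ≤ μ)
    (h : ∀ t, 0 ≤ C * t ^ 2 + s * t + μ * (|a + t| - |a|)) :
    |s| ≤ μ ∧ μ * |a| + s * a = 0 := by
  have hs : |s| ≤ μ := by
    refine abs_le.2 ⟨?_, ?_⟩ <;> refine le_of_forall_mem_Ioc_le_add_mul (C := C) fun ε hε => ?_
    · have h1 := h ε
      have h2 : |a + ε| ≤ |a| + ε := by simpa [abs_of_pos hε.1] using abs_add_le a ε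
      nlinarith [hε.1, mul_le_mul_of_nonneg_left h2 hμ]
    · have h1 := h (-ε)
      have h2 : |a + -ε| ≤ |a| + ε := by simpa [abs_of_pos hε.1] using abs_add_le a (-ε)
      nlinarith [hε.1, mul_le_mul_of_nonneg_left h2 hμ]
  refine ⟨hs, le_antisymm ?_ (by nlinarith [neg_abs_le (s * a), abs_mul s a, abs_nonneg a])⟩
  refine le_of_forall_mem_Ioc_le_add_mul (C := C * a ^ 2) fun l hl => ?_
  have h1 := h (-(l * a))
  have h2 : |a + -(l * a)| = (1 - l) * |a| := by
    rw [show a + -(l * a) = (1 - l) * a by ring, abs_mul, abs_of_nonneg (by linarith [hl.2])]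
  rw [h2] at h1
  nlinarith [hl.1]

lemma abs_eq_of_mul_abs_add_mul_eq_zero {s a μ : ℝ} (hs : |s| ≤ μ) (ha : a ≠ 0)
    (h : μ * |a| + s * a = 0) : |s| = μ := by
  refine le_antisymm hs (le_of_mul_le_mul_right ?_ (abs_pos.2 ha))
  nlinarith [neg_abs_le (s * a), abs_mul s a]

lemma mul_abs_add_mul_eq_zero_of_mul_pos {s a c μ : ℝ} (hac : 0 < a * c)
    (h : μ * |a| + s * a = 0) : μ * |c| + s * c = 0 := by
  rcases pos_and_pos_or_neg_and_neg_of_mul_pos hac with ⟨ha, hc⟩ | ⟨ha, hc⟩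
  · rw [abs_of_pos ha] at h
    rw [abs_of_pos hc]
    have : μ + s = 0 := (mul_eq_zero.1 (by linear_combination h)).resolve_right ha.ne'
    linear_combination c * this
  · rw [abs_of_neg ha] at h
    rw [abs_of_neg hc]
    have : s - μ = 0 := (mul_eq_zero.1 (by linear_combination h)).resolve_right ha.ne
    linear_combination c * this

lemma exists_pos_forall_mul_add_mul_pos {ι : Type*} {J : Finset ι} {x : ι → ℝ}
    (hx : ∀ j ∈ J, x j ≠ 0) (v : ι → ℝ) : ∃ t > 0, ∀ j ∈ J, 0 < x j * (x j + t * v j) := by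
  have hev : ∀ᶠ t in 𝓝[>] (0 : ℝ), ∀ j ∈ J, 0 < x j * (x j + t * v j) := by
    refine (eventually_all_finset J).2 fun j hj => ?_
    have hlim : Tendsto (fun t => x j * (x j + t * v j)) (𝓝 0) (𝓝 (x j * x j)) := by
      simpa using tendsto_const_nhds.mul
        (tendsto_const_nhds.add ((tendsto_id (x := 𝓝 (0 : ℝ))).mul tendsto_const_nhds))
    exact (hlim.eventually (lt_mem_nhds (mul_self_pos.2 (hx j hj)))).filter_mono
      nhdsWithin_le_nhds
  exact (hev.and self_mem_nhdsWithin).exists.imp fun t ht => ⟨ht.2, ht.1⟩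

lemma dotProduct_self_nonneg {ι R : Type*} [Fintype ι] [CommRing R] [LinearOrder R]
    [IsStrictOrderedRing R] (v : ι → R) : 0 ≤ v ⬝ᵥ v :=
  sum_nonneg fun i _ => mul_self_nonneg (v i)

namespace Lasso

variable {m n : ℕ} (A : Matrix (Fin m) (Fin n) ℝ) (b : Fin m → ℝ) (μ : ℝ)

noncomputable def objective (x : Fin n → ℝ) : ℝ :=
  1 / 2 * ((A *ᵥ x - b) ⬝ᵥ (A *ᵥ x - b)) + μ * ∑ j, |x j|

def IsMinimizer (x : Fin n → ℝ) : Prop := ∀ y, objective A b μ x ≤ objective A b μ y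

def lossGradient (x : Fin n → ℝ) : Fin n → ℝ := (A *ᵥ x - b) ᵥ* A

theorem objective_add (x d : Fin n → ℝ) :
    objective A b μ (x + d) = objective A b μ x + 1 / 2 * ((A *ᵥ d) ⬝ᵥ (A *ᵥ d))
      + lossGradient A b x ⬝ᵥ d + μ * ∑ j, (|x j + d j| - |x j|) := by
  have hres : A *ᵥ (x + d) - b = (A *ᵥ x - b) + A *ᵥ d := by
    rw [mulVec_add]; abel
  simp only [objective, lossGradient, hres, add_dotProduct, dotProduct_add, Pi.add_apply,
    ← dotProduct_mulVec, dotProduct_comm (A *ᵥ d) (A *ᵥ x - b), sum_sub_distrib]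
  ring

variable {A b μ}

theorem IsMinimizer.abs_lossGradient_le_and_mul_abs_add_mul_eq_zero (hμ : 0 ≤ μ)
    {x : Fin n → ℝ} (hx : IsMinimizer A b μ x) (j : Fin n) :
    |lossGradient A b x j| ≤ μ ∧ μ * |x j| + lossGradient A b x j * x j = 0 := by
  refine abs_le_and_mul_abs_add_mul_eq_zero hμ (C := 1 / 2 * (A.col j ⬝ᵥ A.col j)) fun t => ?_
  have h := hx (x + Pi.single j t)
  rw [objective_add, mulVec_single, dotProduct_single,
    sum_eq_single j (fun i _ hi => by simp [hi]) (by simp)] at h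
  simp only [Pi.single_eq_same, op_smul_eq_smul, smul_dotProduct, dotProduct_smul,
    smul_eq_mul] at h
  linear_combination h

theorem objective_eq_add_of_isMinimizer (hμ : 0 ≤ μ) {x : Fin n → ℝ}
    (hx : IsMinimizer A b μ x) (y : Fin n → ℝ) :
    objective A b μ y = objective A b μ x + 1 / 2 * ((A *ᵥ (y - x)) ⬝ᵥ (A *ᵥ (y - x)))
      + ∑ j, (μ * |y j| + lossGradient A b x j * y j) := by
  have hcompl : ∑ j, (μ * |x j| + lossGradient A b x j * x j) = 0 :=
    sum_eq_zero fun j _ => (hx.abs_lossGradient_le_and_mul_abs_add_mul_eq_zero hμ j).2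
  have h := objective_add A b μ x (y - x)
  rw [add_sub_cancel] at h
  rw [h]
  simp only [dotProduct, Pi.sub_apply, add_sub_cancel, mul_sub, sum_add_distrib,
    sum_sub_distrib, ← mul_sum] at h hcompl ⊢
  linarith

theorem isMinimizer_iff (hμ : 0 ≤ μ) {x : Fin n → ℝ}
    (hx : IsMinimizer A b μ x) {y : Fin n → ℝ} :
    IsMinimizer A b μ y ↔
      A *ᵥ y = A *ᵥ x ∧ ∀ j, μ * |y j| + lossGradient A b x j * y j = 0 := by
  have hy := objective_eq_add_of_isMinimizer hμ hx y
  have hterm : ∀ j ∈ univ, 0 ≤ μ * |y j| + lossGradient A b x j * y j := fun j _ => by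
    nlinarith [(hx.abs_lossGradient_le_and_mul_abs_add_mul_eq_zero hμ j).1,
      neg_abs_le (lossGradient A b x j * y j), abs_mul (lossGradient A b x j) (y j),
      abs_nonneg (y j)]
  constructor
  · intro hmin
    have hquad := dotProduct_self_nonneg (A *ᵥ (y - x))
    have hsum := sum_nonneg hterm
    have hle := hmin x
    refine ⟨?_, fun j => (sum_eq_zero_iff_of_nonneg hterm).1 (by linarith) j (mem_univ j)⟩
    rw [← sub_eq_zero, ← mulVec_sub, ← dotProduct_self_eq_zero]
    linarith
  · rintro ⟨hA, hcompl⟩ z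
    rw [hy, mulVec_sub, hA, sub_self, zero_dotProduct, sum_eq_zero fun j _ => hcompl j]
    simpa using hx z

/-- The paper's change of variables `u ↦ (u_J, -Q_K u_K)`, written on all of `Fin n`. -/
def twist (K : Finset (Fin n)) (q u : Fin n → ℝ) : Fin n → ℝ :=
  fun j => if j ∈ K then -(q j * u j) else u j

@[simp]
theorem twist_zero (K : Finset (Fin n)) (q : Fin n → ℝ) : twist K q 0 = 0 := by
  funext j
  simp [twist]

theorem twist_twist {K : Finset (Fin n)} {q : Fin n → ℝ} (hq : ∀ j ∈ K, q j * q j = 1)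
    (u : Fin n → ℝ) : twist K q (twist K q u) = u := by
  funext j
  by_cases hj : j ∈ K
  · simp only [twist, if_pos hj]
    linear_combination u j * hq j hj
  · simp only [twist, if_neg hj]

theorem mulVec_twist_apply {J K : Finset (Fin n)} (hJK : Disjoint J K) (q : Fin n → ℝ)
    {u : Fin n → ℝ} (hu : ∀ j, j ∉ J ∪ K → u j = 0) (i : Fin m) :
    (A *ᵥ twist K q u) i = ∑ j ∈ J, u j * A i j - ∑ j ∈ K, q j * u j * A i j := by
  have hsupp : ∀ j ∈ univ, j ∉ J ∪ K → A i j * twist K q u j = 0 := fun j _ hj => by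
    simp [twist, hu j hj, show j ∉ K from fun h => hj (mem_union_right J h)]
  rw [mulVec, dotProduct, ← sum_subset (subset_univ _) hsupp, sum_union hJK, sub_eq_add_neg,
    ← sum_neg_distrib]
  congr 1 <;> refine sum_congr rfl fun j hj => ?_
  · simp [twist, disjoint_left.1 hJK hj, mul_comm]
  · simp only [twist, if_pos hj]
    ring

section Uniqueness

variable {x : Fin n → ℝ} {J K : Finset (Fin n)} {q : Fin n → ℝ}

theorem lossGradient_eq_of_mem (hμ : 0 < μ)
    (hK : ∀ j, j ∈ K ↔ |lossGradient A b x j| = μ ∧ x j = 0)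
    (hq : ∀ j, q j = Real.sign (lossGradient A b x j)) {j : Fin n} (hj : j ∈ K) :
    (lossGradient A b x j = μ ∧ q j = 1) ∨ (lossGradient A b x j = -μ ∧ q j = -1) := by
  rcases (abs_eq hμ.le).1 ((hK j).1 hj).1 with h | h
  · exact Or.inl ⟨h, by rw [hq, h, Real.sign_of_pos hμ]⟩
  · exact Or.inr ⟨h, by rw [hq, h, Real.sign_of_neg (neg_lt_zero.2 hμ)]⟩

theorem mul_self_eq_one_of_mem (hμ : 0 < μ)
    (hK : ∀ j, j ∈ K ↔ |lossGradient A b x j| = μ ∧ x j = 0)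
    (hq : ∀ j, q j = Real.sign (lossGradient A b x j)) : ∀ j ∈ K, q j * q j = 1 := by
  intro j hj
  rcases lossGradient_eq_of_mem hμ hK hq hj with ⟨-, h⟩ | ⟨-, h⟩ <;> norm_num [h]

theorem eq_of_isMinimizer (hμ : 0 < μ) (hx : IsMinimizer A b μ x)
    (hJ : ∀ j, j ∈ J ↔ x j ≠ 0) (hK : ∀ j, j ∈ K ↔ |lossGradient A b x j| = μ ∧ x j = 0)
    (hq : ∀ j, q j = Real.sign (lossGradient A b x j))
    (htriv : ∀ u, (∀ j, j ∉ J ∪ K → u j = 0) → (∀ j ∈ K, 0 ≤ u j) →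
      A *ᵥ twist K q u = 0 → u = 0)
    {y : Fin n → ℝ} (hy : IsMinimizer A b μ y) : y = x := by
  obtain ⟨hA, hcompl⟩ := (isMinimizer_iff hμ.le hx).1 hy
  have hinv := twist_twist (mul_self_eq_one_of_mem hμ hK hq) (y - x)
  suffices twist K q (y - x) = 0 by
    rw [this, twist_zero] at hinv
    exact sub_eq_zero.1 hinv.symm
  refine htriv _ (fun j hj => ?_) (fun j hj => ?_) (by rw [hinv, mulVec_sub, hA, sub_self])
  · have hxj : x j = 0 := by simpa [hJ] using fun h => hj (mem_union_left K h)
    have hyj : y j = 0 := by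
      by_contra hyj
      exact hj (mem_union_right J ((hK j).2 ⟨abs_eq_of_mul_abs_add_mul_eq_zero
        (hx.abs_lossGradient_le_and_mul_abs_add_mul_eq_zero hμ.le j).1 hyj (hcompl j), hxj⟩))
    simp [twist, hxj, hyj, show j ∉ K from fun h => hj (mem_union_right J h)]
  · have hxj := ((hK j).1 hj).2
    have hc := hcompl j
    simp only [twist, if_pos hj, Pi.sub_apply, hxj, sub_zero]
    rcases lossGradient_eq_of_mem hμ hK hq hj with ⟨hg, hqj⟩ | ⟨hg, hqj⟩ <;> rw [hg] at hc <;>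
      rw [hqj] <;> nlinarith [abs_nonneg (y j), le_abs_self (y j), neg_abs_le (y j)]

theorem eq_zero_of_unique (hμ : 0 < μ) (hx : IsMinimizer A b μ x)
    (hJ : ∀ j, j ∈ J ↔ x j ≠ 0) (hK : ∀ j, j ∈ K ↔ |lossGradient A b x j| = μ ∧ x j = 0)
    (hq : ∀ j, q j = Real.sign (lossGradient A b x j))
    (huniq : ∀ y, IsMinimizer A b μ y → y = x)
    {u : Fin n → ℝ} (hu : ∀ j, j ∉ J ∪ K → u j = 0) (hpos : ∀ j ∈ K, 0 ≤ u j)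
    (hA : A *ᵥ twist K q u = 0) : u = 0 := by
  set v := twist K q u
  obtain ⟨t, ht, hsign⟩ := exists_pos_forall_mul_add_mul_pos (fun j hj => (hJ j).1 hj) v
  have hy : x + t • v = x := by
    refine huniq _ ((isMinimizer_iff hμ.le hx).2
      ⟨by rw [mulVec_add, mulVec_smul, hA, smul_zero, add_zero], fun j => ?_⟩)
    have hcompl := (hx.abs_lossGradient_le_and_mul_abs_add_mul_eq_zero hμ.le j).2
    simp only [Pi.add_apply, Pi.smul_apply, smul_eq_mul]
    by_cases hjJ : j ∈ J
    · exact mul_abs_add_mul_eq_zero_of_mul_pos (hsign j hjJ) hcompl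
    by_cases hjK : j ∈ K
    · have hxj := ((hK j).1 hjK).2
      simp only [v, twist, if_pos hjK, hxj, zero_add]
      rcases lossGradient_eq_of_mem hμ hK hq hjK with ⟨hg, hqj⟩ | ⟨hg, hqj⟩ <;>
        simp [hg, hqj, abs_mul, abs_of_pos ht, abs_of_nonneg (hpos j hjK)]
    · have hxj : x j = 0 := by simpa [hJ] using hjJ
      simp [v, twist, hxj, hjK, hu j (by simp [hjJ, hjK])]
  have hv : v = 0 := by
    simpa [ht.ne'] using hy
  calc u = twist K q v := (twist_twist (mul_self_eq_one_of_mem hμ hK hq) u).symm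
    _ = 0 := by rw [hv, twist_zero]

end Uniqueness

end Lasso

/-- Characterization of uniqueness of the Lasso optimal solution `x*`: `x*` is the
unique minimizer of `F₂(x) = (1/2)‖Ax − b‖² + μ‖x‖₁` iff the system
`A_J u_J − A_K Q_K u_K = 0`, `u_K ≥ 0` has only the trivial solution. -/
theorem stmt_18 (m n : ℕ) (A : Matrix (Fin m) (Fin n) ℝ)
    (b : EuclideanSpace ℝ (Fin m)) (μ : ℝ) (hμ : 0 < μ)
    (F2 : EuclideanSpace ℝ (Fin n) → ℝ)
    (hF2 : ∀ x, F2 x = (1 / 2) * ‖(EuclideanSpace.equiv (Fin m) ℝ).symm (A.mulVec x) - b‖ ^ 2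
      + μ * ∑ j, |x j|)
    (xstar : EuclideanSpace ℝ (Fin n)) (hopt : ∀ y, F2 xstar ≤ F2 y)
    (r : Fin n → ℝ) (hr : r = Matrix.vecMul (fun i => A.mulVec xstar i - b i) A)
    (J E K : Finset (Fin n))
    (hJ : J = Finset.univ.filter (fun j => xstar j ≠ 0))
    (hE : E = Finset.univ.filter (fun j => |r j| = μ))
    (hK : K = E \ J)
    (q : Fin n → ℝ) (hq : ∀ j, q j = Real.sign (r j)) :
    (∀ y, (∀ z, F2 y ≤ F2 z) → y = xstar) ↔
      (∀ u : EuclideanSpace ℝ (Fin n),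
        (∀ j, j ∉ J ∪ K → u j = 0) → (∀ j ∈ K, 0 ≤ u j) →
        (∀ i, ∑ j ∈ J, u j * A i j - ∑ j ∈ K, q j * u j * A i j = 0) →
        u = 0) := by
  have hobj : ∀ x, F2 x = Lasso.objective A b μ x := fun x => by
    rw [hF2, Lasso.objective, EuclideanSpace.real_norm_sq_eq, dotProduct]
    simp [sq]
  have hmin : ∀ y, (∀ z, F2 y ≤ F2 z) ↔ Lasso.IsMinimizer A b μ y := fun y => by
    simp only [hobj]
    exact ⟨fun h z => h (WithLp.toLp 2 z), fun h z => h z⟩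
  have hx := (hmin xstar).1 hopt
  replace hr : r = Lasso.lossGradient A b xstar := hr
  subst hr
  have hmemJ : ∀ j, j ∈ J ↔ xstar j ≠ 0 := by simp [hJ]
  have hmemK : ∀ j, j ∈ K ↔ |Lasso.lossGradient A b xstar j| = μ ∧ xstar j = 0 := by
    simp [hK, hE, hJ]
  have hJK : Disjoint J K := hK ▸ disjoint_sdiff
  constructor
  · intro huniq u hu hpos hsys
    refine WithLp.ofLp_injective 2 (Lasso.eq_zero_of_unique hμ hx hmemJ hmemK hq
      (fun y hy => congrArg WithLp.ofLp (huniq (WithLp.toLp 2 y) ((hmin _).2 hy))) hu hpos ?_)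
    funext i
    rw [Lasso.mulVec_twist_apply hJK q hu]
    exact hsys i
  · intro htriv y hy
    refine WithLp.ofLp_injective 2 (Lasso.eq_of_isMinimizer hμ hx hmemJ hmemK hq
      (fun u hu hpos hA => congrArg WithLp.ofLp (htriv (WithLp.toLp 2 u) hu hpos fun i => ?_))
      ((hmin y).1 hy))
    rw [← Lasso.mulVec_twist_apply hJK q hu, hA, Pi.zero_apply]
end

section
/- Let A be a real m×n matrix and let J and K be disjoint subsets of {1, …, n}. Let A_J and A_K be the submatrices of A formed by the columns indexed by J and K, and let Q_K be a diagonal |K|×|K| matrix whose diagonal entries are all ±1. Then the following are equivalent: (ii) the system A_J x_J − A_K Q_K x_K = 0 with x_K ∈ ℝ^K, x_K ≥ 0 componentwise, has only the solution (x_J, x_K) = (0, 0); (iii) A_J has full column rank (its columns are linearly independent) and Ker(A_J A_J† A_K Q_K − A_K Q_K) ∩ ℝ^K₊ = {0}, where A_J† := (A_JᵀA_J)⁻¹A_Jᵀ is the Moore–Penrose pseudoinverse of the full-column-rank matrix A_J; i.e. the columns of A_J A_J† A_K Q_K − A_K Q_K are positively linearly independent. -/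
/-! When `A_J` is injective, so is `A_JᵀA_J` (its kernel is that of `A_J`), hence
`A_J† = (A_JᵀA_J)⁻¹A_Jᵀ` satisfies `A_J A_J† A_J = A_J`. A solution of `A_J x_J = A_K Q_K x_K`
puts `A_K Q_K x_K` in the range of `A_J`, which `A_J A_J†` fixes; conversely, an `x_K` in the kernel
of `A_J A_J† A_K Q_K − A_K Q_K` yields the solution `(A_J† A_K Q_K x_K, x_K)`. -/

namespace Matrix

section GeneralizedInverse

variable {R m ι κ : Type*} [Ring R] [Fintype m] [Fintype ι] [Fintype κ]
  {A : Matrix m ι R} {B : Matrix m κ R} {C : Set (κ → R)}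

theorem injective_and_cone_ker_of_trivial_solutions (L : Matrix ι m R) (hC : 0 ∈ C)
    (h : ∀ x y, y ∈ C → A *ᵥ x - B *ᵥ y = 0 → x = 0 ∧ y = 0) :
    (∀ x, A *ᵥ x = 0 → x = 0) ∧ ∀ y ∈ C, (A * L * B - B) *ᵥ y = 0 → y = 0 := by
  refine ⟨fun x hx => (h x 0 hC (by simp [hx])).1, fun y hy hLy => (h (L *ᵥ B *ᵥ y) y hy ?_).2⟩
  rwa [sub_mulVec, ← mulVec_mulVec, ← mulVec_mulVec] at hLy

theorem trivial_solutions_of_cone_ker {L : Matrix ι m R} (hL : A * L * A = A)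
    (hA : ∀ x, A *ᵥ x = 0 → x = 0) (hker : ∀ y ∈ C, (A * L * B - B) *ᵥ y = 0 → y = 0) :
    ∀ x y, y ∈ C → A *ᵥ x - B *ᵥ y = 0 → x = 0 ∧ y = 0 := by
  intro x y hy hxy
  rw [sub_eq_zero] at hxy
  have hy0 : y = 0 := hker y hy <| by
    rw [sub_mulVec, sub_eq_zero, ← mulVec_mulVec, ← hxy, mulVec_mulVec, hL, hxy]
  exact ⟨hA x (by rw [hxy, hy0, mulVec_zero]), hy0⟩

end GeneralizedInverse

section LinearOrderedField

variable {R m ι κ : Type*} [Field R] [LinearOrder R] [IsStrictOrderedRing R]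
  [Fintype m] [Fintype ι] [Fintype κ] [DecidableEq ι]

theorem isUnit_det_transpose_mul_self {A : Matrix m ι R} (hA : ∀ x, A *ᵥ x = 0 → x = 0) :
    IsUnit (Aᵀ * A).det := by
  have hinj : Function.Injective (Aᵀ * A).mulVec := by
    rw [← coe_mulVecLin, ← LinearMap.ker_eq_bot, ker_mulVecLin_transpose_mul_self,
      LinearMap.ker_eq_bot']
    exact hA
  exact (isUnit_iff_isUnit_det _).mp (mulVec_injective_iff_isUnit.mp hinj)

theorem mul_pinv_mul_self {A : Matrix m ι R} (hA : ∀ x, A *ᵥ x = 0 → x = 0) :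
    A * ((Aᵀ * A)⁻¹ * Aᵀ) * A = A := by
  rw [Matrix.mul_assoc, Matrix.mul_assoc, nonsing_inv_mul _ (isUnit_det_transpose_mul_self hA),
    Matrix.mul_one]

theorem trivial_solutions_iff_injective_and_cone_ker (A : Matrix m ι R) (B : Matrix m κ R)
    {C : Set (κ → R)} (hC : 0 ∈ C) :
    (∀ x y, y ∈ C → A *ᵥ x - B *ᵥ y = 0 → x = 0 ∧ y = 0) ↔
      (∀ x, A *ᵥ x = 0 → x = 0) ∧
        ∀ y ∈ C, (A * ((Aᵀ * A)⁻¹ * Aᵀ) * B - B) *ᵥ y = 0 → y = 0 :=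
  ⟨injective_and_cone_ker_of_trivial_solutions _ hC,
    fun ⟨hA, hker⟩ => trivial_solutions_of_cone_ker (mul_pinv_mul_self hA) hA hker⟩

end LinearOrderedField

end Matrix

theorem stmt_19_general (m n : ℕ)
    (J K : Finset (Fin n))
    (AJ : Matrix (Fin m) {j // j ∈ J} ℝ)
    (AK : Matrix (Fin m) {j // j ∈ K} ℝ)
    (QK : Matrix {j // j ∈ K} {j // j ∈ K} ℝ)
    (AJdag : Matrix {j // j ∈ J} (Fin m) ℝ)
    (hAJdag : AJdag = (AJ.transpose * AJ)⁻¹ * AJ.transpose) :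
    (∀ (xJ : {j // j ∈ J} → ℝ) (xK : {j // j ∈ K} → ℝ), (∀ k, 0 ≤ xK k) →
        AJ.mulVec xJ - (AK * QK).mulVec xK = 0 → xJ = 0 ∧ xK = 0) ↔
      ((∀ xJ : {j // j ∈ J} → ℝ, AJ.mulVec xJ = 0 → xJ = 0) ∧
        (∀ xK : {j // j ∈ K} → ℝ, (∀ k, 0 ≤ xK k) →
          (AJ * AJdag * (AK * QK) - AK * QK).mulVec xK = 0 → xK = 0)) := by
  subst hAJdag
  exact Matrix.trivial_solutions_iff_injective_and_cone_ker AJ (AK * QK)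
    (C := {y | ∀ k, 0 ≤ y k}) fun _ => le_rfl

/-- Equivalence (ii) ⇔ (iii): the system `A_J x_J − A_K Q_K x_K = 0`, `x_K ≥ 0` has
only the trivial solution iff `A_J` has full column rank and the columns of
`A_J A_J† A_K Q_K − A_K Q_K` are positively linearly independent. -/
theorem stmt_19 (m n : ℕ) (A : Matrix (Fin m) (Fin n) ℝ)
    (J K : Finset (Fin n)) (hJK : Disjoint J K)
    (q : Fin n → ℝ) (hq : ∀ j ∈ K, q j = 1 ∨ q j = -1)
    (AJ : Matrix (Fin m) {j // j ∈ J} ℝ) (hAJ : ∀ i j, AJ i j = A i j.1)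
    (AK : Matrix (Fin m) {j // j ∈ K} ℝ) (hAK : ∀ i j, AK i j = A i j.1)
    (QK : Matrix {j // j ∈ K} {j // j ∈ K} ℝ)
    (hQK : QK = Matrix.diagonal (fun k => q k.1))
    (AJdag : Matrix {j // j ∈ J} (Fin m) ℝ)
    (hAJdag : AJdag = (AJ.transpose * AJ)⁻¹ * AJ.transpose) :
    (∀ (xJ : {j // j ∈ J} → ℝ) (xK : {j // j ∈ K} → ℝ), (∀ k, 0 ≤ xK k) →
        AJ.mulVec xJ - (AK * QK).mulVec xK = 0 → xJ = 0 ∧ xK = 0) ↔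
      ((∀ xJ : {j // j ∈ J} → ℝ, AJ.mulVec xJ = 0 → xJ = 0) ∧
        (∀ xK : {j // j ∈ K} → ℝ, (∀ k, 0 ≤ xK k) →
          (AJ * AJdag * (AK * QK) - AK * QK).mulVec xK = 0 → xK = 0)) :=
  stmt_19_general m n J K AJ AK QK AJdag hAJdag
end
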